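/- arXiv:1207.0907 — 7 statements merged into one kernel-verified Lean document; each statement's English description precedes it below -/
import Mathlib

section
/- Suppose Φ : ℝⁿ → ℝ≥0 is a C¹, positive definite and proper function which is a control Lyapunov function for the system ẋ = F(x,u), i.e., for every x ≠ 0 there exists a vector u ∈ ℝ^ℓ with DΦ(x)·F(x,u) < 0. Then for every constant σ > 0 and every x ≠ 0 there exist a time τ = τ(x) ∈ (0, σ] and a (constant) control u_x : [0, τ] → ℝ^ℓ such that the corresponding trajectory satisfies Φ(π(t, 0, x, u_x)) < Φ(x) for all t ∈ (0, τ]; in particular, conditions (2.7a,b) are fulfilled with β(s) = s, namely Φ(π(τ, 0, x, u_x)) < Φ(x) and Φ(π(t, 0, x, u_x)) ≤ Φ(x) for all t ∈ [0, τ]. -/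
/-!
Freeze the control at a value `u` with `DΦ(x)·F(x,u) < 0`. The field `F(·,u)` is Lipschitz, so
Picard–Lindelöf gives a solution on a short interval `[0, ε]`, and the right derivative of `Φ`
along it at `t = 0` is `DΦ(x)·F(x,u) < 0`; hence `Φ` stays strictly below `Φ(x)` on some `(0, τ]`.
-/

open MeasureTheory Filter Set Topology
open scoped NNReal

theorem HasDerivWithinAt.eventually_nhdsGT_lt_of_neg {g : ℝ → ℝ} {d a : ℝ}
    (hg : HasDerivWithinAt g d (Ici a) a) (hd : d < 0) : ∀ᶠ t in 𝓝[>] a, g t < g a := by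
  filter_upwards [hg.Ioi_of_Ici.limsup_slope_le' (lt_irrefl a) hd, self_mem_nhdsWithin]
    with t hslope hat
  exact (slope_neg_iff_of_le (le_of_lt hat)).1 hslope

theorem Filter.Eventually.exists_forall_mem_Ioc_of_nhdsGT {p : ℝ → Prop} {a : ℝ}
    (h : ∀ᶠ t in 𝓝[>] a, p t) {b : ℝ} (hab : a < b) : ∃ c ∈ Ioc a b, ∀ t ∈ Ioc a c, p t := by
  obtain ⟨δ, hδ, hsub⟩ := mem_nhdsGT_iff_exists_Ioc_subset.1 h
  exact ⟨min δ b, ⟨lt_min hδ hab, min_le_right _ _⟩,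
    fun t ht ↦ hsub ⟨ht.1, ht.2.trans (min_le_left _ _)⟩⟩

section

variable {E : Type*} [NormedAddCommGroup E] [NormedSpace ℝ E] [CompleteSpace E]

theorem LipschitzWith.exists_forall_mem_Icc_hasDerivWithinAt {v : E → E} {K : ℝ≥0}
    (hv : LipschitzWith K v) (x₀ : E) {σ : ℝ} (hσ : 0 < σ) :
    ∃ ε ∈ Ioc 0 σ, ∃ γ : ℝ → E, γ 0 = x₀ ∧
      ∀ t ∈ Icc 0 ε, HasDerivWithinAt γ (v (γ t)) (Icc 0 ε) t := by
  set L : ℝ≥0 := ‖v x₀‖₊ + K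
  -- `L` bounds `‖v‖` on the unit ball around `x₀`, which no solution leaves before time `1 / L`.
  set ε := min σ (1 / (L + 1))
  have hε : 0 < ε := lt_min hσ (by positivity)
  have hbound : ∀ y ∈ Metric.closedBall x₀ (1 : ℝ≥0), ‖v y‖ ≤ L := by
    intro y hy
    have hy : ‖y - x₀‖ ≤ 1 := by simpa [dist_eq_norm] using hy
    calc ‖v y‖ ≤ ‖v y - v x₀‖ + ‖v x₀‖ := norm_le_norm_sub_add _ _
      _ ≤ K * ‖y - x₀‖ + ‖v x₀‖ := by gcongr; exact hv.norm_sub_le y x₀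
      _ ≤ L := by simp only [L, NNReal.coe_add, coe_nnnorm]; nlinarith [K.coe_nonneg]
  have hpl : IsPicardLindelof (fun _ ↦ v) (tmin := 0) (tmax := ε) ⟨0, le_rfl, hε.le⟩ x₀ 1 0 L K :=
    IsPicardLindelof.of_time_independent hbound hv.lipschitzOnWith <| by
      simp only [sub_zero, max_eq_left hε.le, NNReal.coe_one, NNReal.coe_zero]
      calc (L : ℝ) * ε ≤ L * (1 / (L + 1)) := by gcongr; exact min_le_right _ _
        _ ≤ 1 := by rw [mul_one_div, div_le_one (by positivity)]; linarith
  exact ⟨ε, ⟨hε, min_le_left _ _⟩, hpl.exists_eq_forall_mem_Icc_hasDerivWithinAt₀⟩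

theorem eq_add_integral_of_forall_mem_Icc_hasDerivWithinAt {v : E → E} (hv : Continuous v)
    {γ : ℝ → E} {a b : ℝ} (hγ : ∀ t ∈ Icc a b, HasDerivWithinAt γ (v (γ t)) (Icc a b) t) :
    ∀ t ∈ Icc a b, γ t = γ a + ∫ r in a..t, v (γ r) := by
  intro t ht
  have hcont : ContinuousOn γ (Icc a t) := fun r hr ↦
    ((hγ r (Icc_subset_Icc_right ht.2 hr)).continuousWithinAt).mono (Icc_subset_Icc_right ht.2)
  have hderiv : ∀ r ∈ Ioo a t, HasDerivAt γ (v (γ r)) r := fun r hr ↦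
    (hγ r ⟨hr.1.le, hr.2.le.trans ht.2⟩).hasDerivAt (Icc_mem_nhds hr.1 (hr.2.trans_le ht.2))
  rw [intervalIntegral.integral_eq_sub_of_hasDerivAt_of_le ht.1 hcont hderiv
    ((hv.comp_continuousOn hcont).intervalIntegrable_of_Icc ht.1), add_sub_cancel]

theorem LipschitzWith.exists_integralCurve_lt_of_fderiv_neg {v : E → E} {K : ℝ≥0}
    (hv : LipschitzWith K v) {Φ : E → ℝ} {x : E} (hΦ : DifferentiableAt ℝ Φ x)
    (hdec : fderiv ℝ Φ x (v x) < 0) {σ : ℝ} (hσ : 0 < σ) :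
    ∃ τ ∈ Ioc 0 σ, ∃ π : ℝ → E, π 0 = x ∧
      (∀ t ∈ Icc 0 τ, π t = x + ∫ r in (0 : ℝ)..t, v (π r)) ∧ ∀ t ∈ Ioc 0 τ, Φ (π t) < Φ x := by
  obtain ⟨ε, ⟨hε, hεσ⟩, γ, rfl, hγ⟩ := hv.exists_forall_mem_Icc_hasDerivWithinAt x hσ
  have hΦγ : HasDerivWithinAt (Φ ∘ γ) (fderiv ℝ Φ (γ 0) (v (γ 0))) (Ici 0) 0 :=
    (hΦ.hasFDerivAt.comp_hasDerivWithinAt 0 (hγ 0 ⟨le_rfl, hε.le⟩)).mono_of_mem_nhdsWithin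
      (Icc_mem_nhdsGE hε)
  obtain ⟨τ, ⟨hτ, hτε⟩, hlt⟩ :=
    (hΦγ.eventually_nhdsGT_lt_of_neg hdec).exists_forall_mem_Ioc_of_nhdsGT hε
  exact ⟨τ, ⟨hτ, hτε.trans hεσ⟩, γ, rfl, fun t ht ↦
    eq_add_integral_of_forall_mem_Icc_hasDerivWithinAt hv.continuous hγ t
      (Icc_subset_Icc_right hτε ht), hlt⟩

end

theorem clf_implies_decrease_general {n l : ℕ}
    (F : EuclideanSpace ℝ (Fin n) → EuclideanSpace ℝ (Fin l) → EuclideanSpace ℝ (Fin n))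
    (hFlip : ∃ K : NNReal, LipschitzWith K (Function.uncurry F))
    (Φ : EuclideanSpace ℝ (Fin n) → ℝ)
    (hΦC1 : ContDiff ℝ 1 Φ)
    (hCLF : ∀ x : EuclideanSpace ℝ (Fin n), x ≠ 0 →
      ∃ u : EuclideanSpace ℝ (Fin l), fderiv ℝ Φ x (F x u) < 0) :
    ∀ σ > (0:ℝ), ∀ x : EuclideanSpace ℝ (Fin n), x ≠ 0 →
      ∃ τ ∈ Set.Ioc (0:ℝ) σ, ∃ u : EuclideanSpace ℝ (Fin l),
      ∃ π : ℝ → EuclideanSpace ℝ (Fin n),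
        π 0 = x ∧
        (∀ t ∈ Set.Icc (0:ℝ) τ, π t = x + ∫ r in (0:ℝ)..t, F (π r) u) ∧
        (∀ t ∈ Set.Ioc (0:ℝ) τ, Φ (π t) < Φ x) ∧
        -- in particular, (2.7a,b) with β(s) = s:
        Φ (π τ) < Φ x ∧
        (∀ t ∈ Set.Icc (0:ℝ) τ, Φ (π t) ≤ Φ x) := by
  intro σ hσ x hx
  obtain ⟨K, hK⟩ := hFlip
  obtain ⟨u, hu⟩ := hCLF x hx
  have hKu : LipschitzWith K (F · u) := by
    simpa [Function.comp_def] using hK.comp (LipschitzWith.prodMk_right u)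
  obtain ⟨τ, hτ, π, hπ0, hπ, hlt⟩ :=
    hKu.exists_integralCurve_lt_of_fderiv_neg (hΦC1.differentiable one_ne_zero x) hu hσ
  refine ⟨τ, hτ, u, π, hπ0, hπ, hlt, hlt τ ⟨hτ.1, le_rfl⟩, fun t ht ↦ ?_⟩
  rcases ht.1.eq_or_lt with rfl | ht0
  · rw [hπ0]
  · exact (hlt t ⟨ht0, ht.2⟩).le

/-- If `Φ` is a `C¹`, positive definite, proper control Lyapunov function for
`ẋ = F(x,u)`, then for every `σ > 0` and every `x ≠ 0` there exist `τ ∈ (0,σ]` and a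
constant control `u` such that the corresponding trajectory satisfies
`Φ(π(t)) < Φ(x)` for all `t ∈ (0,τ]`; in particular (2.7a,b) hold with `β(s) = s`. -/
theorem clf_implies_decrease {n l : ℕ}
    (F : EuclideanSpace ℝ (Fin n) → EuclideanSpace ℝ (Fin l) → EuclideanSpace ℝ (Fin n))
    (hFlip : ∃ K : NNReal, LipschitzWith K (Function.uncurry F))
    (hF0 : F 0 0 = 0)
    (Φ : EuclideanSpace ℝ (Fin n) → ℝ)
    (hΦC1 : ContDiff ℝ 1 Φ)
    (hΦ0 : Φ 0 = 0) (hΦpos : ∀ x : EuclideanSpace ℝ (Fin n), x ≠ 0 → 0 < Φ x)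
    (hΦproper : ∀ c : ℝ, IsCompact {x : EuclideanSpace ℝ (Fin n) | Φ x ≤ c})
    (hCLF : ∀ x : EuclideanSpace ℝ (Fin n), x ≠ 0 →
      ∃ u : EuclideanSpace ℝ (Fin l), fderiv ℝ Φ x (F x u) < 0) :
    ∀ σ > (0:ℝ), ∀ x : EuclideanSpace ℝ (Fin n), x ≠ 0 →
      ∃ τ ∈ Set.Ioc (0:ℝ) σ, ∃ u : EuclideanSpace ℝ (Fin l),
      ∃ π : ℝ → EuclideanSpace ℝ (Fin n),
        π 0 = x ∧
        (∀ t ∈ Set.Icc (0:ℝ) τ, π t = x + ∫ r in (0:ℝ)..t, F (π r) u) ∧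
        (∀ t ∈ Set.Ioc (0:ℝ) τ, Φ (π t) < Φ x) ∧
        -- in particular, (2.7a,b) with β(s) = s:
        Φ (π τ) < Φ x ∧
        (∀ t ∈ Set.Icc (0:ℝ) τ, Φ (π t) ≤ Φ x) :=
  clf_implies_decrease_general F hFlip Φ hΦC1 hCLF
end

section
/- Let f, g : ℝⁿ → ℝⁿ be C² vector fields and Φ : ℝⁿ → ℝ a C² function, and let x₀ ≠ 0 satisfy (gΦ)(x₀) = 0, (fΦ)(x₀) = 0 and ([f,g]Φ)(x₀) ≠ 0. Then there exist constants u₁, u₂ ∈ ℝ and t̄ > 0 such that for all t ∈ (0, t̄], Φ((X_t ∘ Y_t)(x₀)) < Φ(x₀), where Y_t(x₀) denotes the value at time t of the solution of ẏ = f(y) + u₁ g(y) starting at x₀ at time 0, and X_t(z) denotes the value at time t of the solution of ẋ = f(x) + u₂ g(x) starting at z at time 0. -/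
open Filter Set

noncomputable section

/-!
Flow along `V₁ = f - u g` and then along `V₂ = f + u g`. The first Lie derivatives `V₁Φ`, `V₂Φ`
vanish at `x₀`, so comparing `Φ` and its Lie derivatives along the two curves with polynomials in
`t` (a mean value argument, twice) gives
`Φ((X_t ∘ Y_t) x₀) ≤ Φ x₀ + t²/2 · (c + ε)` for small `t`, where
`c = (V₁V₁Φ + 2 V₁V₂Φ + V₂V₂Φ)(x₀)` and `ε` is any positive number, by continuity of the second
Lie derivatives. By symmetry of the Hessian of `Φ`, `c = 4 f(fΦ)(x₀) + 2u [f,g]Φ(x₀)`, and as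
`[f,g]Φ(x₀) ≠ 0` the constant `u` can be chosen to make `c` negative.
-/

open Metric VectorField
open scoped Topology

variable {E F : Type*} [NormedAddCommGroup E] [NormedSpace ℝ E]
  [NormedAddCommGroup F] [NormedSpace ℝ F]

def lieDeriv (V : E → E) (W : E → F) (x : E) : F := fderiv ℝ W x (V x)

section LieDerivAlgebra

variable {V V' : E → E} {W W' : E → F} {x : E}

theorem lieDeriv_add_left : lieDeriv (V + V') W = lieDeriv V W + lieDeriv V' W := by
  ext y; simp [lieDeriv]

theorem lieDeriv_smul_left (c : ℝ) : lieDeriv (c • V) W = c • lieDeriv V W := by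
  ext y; simp [lieDeriv]

theorem lieDeriv_add_smul_right (hW : DifferentiableAt ℝ W x) (hW' : DifferentiableAt ℝ W' x)
    (c : ℝ) : lieDeriv V (W + c • W') x = lieDeriv V W x + c • lieDeriv V W' x := by
  simp [lieDeriv, fderiv_add hW (hW'.const_smul c), fderiv_const_smul hW']

theorem ContDiff.lieDeriv {n : WithTop ℕ∞} (hW : ContDiff ℝ (n + 1) W) (hV : ContDiff ℝ n V) :
    ContDiff ℝ n (lieDeriv V W) :=
  (hW.fderiv_right le_rfl).clm_apply hV

theorem ContDiffAt.differentiableAt_lieDeriv {Φ : E → F} (hΦ : ContDiffAt ℝ 2 Φ x)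
    (hV : DifferentiableAt ℝ V x) : DifferentiableAt ℝ (lieDeriv V Φ) x :=
  ((hΦ.fderiv_right (m := 1) le_rfl).differentiableAt one_ne_zero).clm_apply hV

theorem lieDeriv_lieDeriv_sub_lieDeriv_lieDeriv {Φ : E → F} (hΦ : ContDiffAt ℝ 2 Φ x)
    (hV : DifferentiableAt ℝ V x) (hV' : DifferentiableAt ℝ V' x) :
    lieDeriv V (lieDeriv V' Φ) x - lieDeriv V' (lieDeriv V Φ) x =
      lieDeriv (lieBracket ℝ V V') Φ x :=
  (fderiv_apply_lieBracket hΦ (by simp) hV' hV).symm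

end LieDerivAlgebra

/-- The coefficient of `t²/2` in the Taylor expansion of `Φ` along the flow of `V₁` for time `t`
followed by the flow of `V₂` for time `t`. -/
def concatSecondCoeff (V₁ V₂ : E → E) (Φ : E → ℝ) (x : E) : ℝ :=
  lieDeriv V₁ (lieDeriv V₁ Φ) x + 2 * lieDeriv V₁ (lieDeriv V₂ Φ) x
    + lieDeriv V₂ (lieDeriv V₂ Φ) x

theorem concatSecondCoeff_sub_smul_add_smul {f g : E → E} {Φ : E → ℝ} {x : E}
    (hΦ : ContDiffAt ℝ 2 Φ x) (hf : DifferentiableAt ℝ f x) (hg : DifferentiableAt ℝ g x)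
    (u : ℝ) :
    concatSecondCoeff (f + (-u) • g) (f + u • g) Φ x
      = 4 * lieDeriv f (lieDeriv f Φ) x + 2 * u * lieDeriv (lieBracket ℝ f g) Φ x := by
  have hfΦ := hΦ.differentiableAt_lieDeriv hf
  have hgΦ := hΦ.differentiableAt_lieDeriv hg
  simp only [concatSecondCoeff, lieDeriv_add_left, lieDeriv_smul_left,
    lieDeriv_add_smul_right hfΦ hgΦ, Pi.add_apply, Pi.smul_apply, smul_eq_mul,
    ← lieDeriv_lieDeriv_sub_lieDeriv_lieDeriv hΦ hf hg]
  ring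

theorem exists_concatSecondCoeff_neg {f g : E → E} {Φ : E → ℝ} {x : E}
    (hΦ : ContDiffAt ℝ 2 Φ x) (hf : DifferentiableAt ℝ f x) (hg : DifferentiableAt ℝ g x)
    (hfg : lieDeriv (lieBracket ℝ f g) Φ x ≠ 0) :
    ∃ u : ℝ, concatSecondCoeff (f + (-u) • g) (f + u • g) Φ x < 0 := by
  refine ⟨-(1 + 4 * lieDeriv f (lieDeriv f Φ) x) / (2 * lieDeriv (lieBracket ℝ f g) Φ x), ?_⟩
  rw [concatSecondCoeff_sub_smul_add_smul hΦ hf hg]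
  field_simp
  linarith

theorem sub_le_sub_of_lieDeriv_le {V : E → E} {W : E → ℝ} (hW : Differentiable ℝ W)
    {c : ℝ → E} {ψ ψ' : ℝ → ℝ} {a b : ℝ} (hab : a ≤ b)
    (hc : ∀ s ∈ Icc a b, HasDerivAt c (V (c s)) s) (hψ : ∀ s ∈ Icc a b, HasDerivAt ψ (ψ' s) s)
    (hle : ∀ s ∈ Icc a b, lieDeriv V W (c s) ≤ ψ' s) :
    W (c b) - W (c a) ≤ ψ b - ψ a := by
  have hderiv : ∀ s ∈ Icc a b,
      HasDerivAt (fun σ => ψ σ - W (c σ)) (ψ' s - lieDeriv V W (c s)) s := fun s hs =>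
    (hψ s hs).sub ((hW (c s)).hasFDerivAt.comp_hasDerivAt s (hc s hs))
  have hmono : MonotoneOn (fun σ => ψ σ - W (c σ)) (Icc a b) := by
    refine monotoneOn_of_hasDerivWithinAt_nonneg (convex_Icc a b)
      (fun s hs => (hderiv s hs).continuousAt.continuousWithinAt) (fun s hs => ?_)
      (fun s hs => sub_nonneg.2 (hle s (interior_subset hs)))
    exact (hderiv s (interior_subset hs)).hasDerivWithinAt
  linarith [hmono ⟨le_rfl, hab⟩ ⟨hab, le_rfl⟩ hab]

theorem sub_le_of_second_lieDeriv_le {V₁ V₂ : E → E} {Φ : E → ℝ} (hΦ : Differentiable ℝ Φ)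
    (hP : Differentiable ℝ (lieDeriv V₁ Φ)) (hQ : Differentiable ℝ (lieDeriv V₂ Φ))
    {c₁ c₂ : ℝ → E} {t K₁₁ K₁₂ K₂₂ : ℝ} (ht : 0 ≤ t)
    (hc₁ : ∀ s ∈ Icc 0 t, HasDerivAt c₁ (V₁ (c₁ s)) s)
    (hc₂ : ∀ s ∈ Icc 0 t, HasDerivAt c₂ (V₂ (c₂ s)) s) (hc₂₀ : c₂ 0 = c₁ t)
    (hP₀ : lieDeriv V₁ Φ (c₁ 0) = 0) (hQ₀ : lieDeriv V₂ Φ (c₁ 0) = 0)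
    (h₁₁ : ∀ s ∈ Icc 0 t, lieDeriv V₁ (lieDeriv V₁ Φ) (c₁ s) ≤ K₁₁)
    (h₁₂ : ∀ s ∈ Icc 0 t, lieDeriv V₁ (lieDeriv V₂ Φ) (c₁ s) ≤ K₁₂)
    (h₂₂ : ∀ s ∈ Icc 0 t, lieDeriv V₂ (lieDeriv V₂ Φ) (c₂ s) ≤ K₂₂) :
    Φ (c₂ t) - Φ (c₁ 0) ≤ t ^ 2 / 2 * (K₁₁ + 2 * K₁₂ + K₂₂) := by
  have hsub : ∀ s ∈ Icc 0 t, Icc 0 s ⊆ Icc 0 t := fun s hs => Icc_subset_Icc le_rfl hs.2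
  have hlin : ∀ K s, HasDerivAt (fun σ : ℝ => σ * K) K s := fun K s => by
    simpa using (hasDerivAt_id s).mul_const K
  have hquad : ∀ K L s, HasDerivAt (fun σ : ℝ => σ * K + σ ^ 2 / 2 * L) (K + s * L) s :=
    fun K L s =>
      ((hlin K s).add (((hasDerivAt_pow 2 s).div_const 2).mul_const L)).congr_deriv (by ring)
  have hPc₁ : ∀ s ∈ Icc 0 t, lieDeriv V₁ Φ (c₁ s) ≤ s * K₁₁ := fun s hs => by
    have := sub_le_sub_of_lieDeriv_le hP hs.1 (fun σ hσ => hc₁ σ (hsub s hs hσ))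
      (fun σ _ => hlin K₁₁ σ) (fun σ hσ => h₁₁ σ (hsub s hs hσ))
    simp only [hP₀] at this
    linarith
  have hQc₁ : lieDeriv V₂ Φ (c₁ t) ≤ t * K₁₂ := by
    have := sub_le_sub_of_lieDeriv_le hQ ht hc₁ (fun σ _ => hlin K₁₂ σ) h₁₂
    simp only [hQ₀] at this
    linarith
  have hQc₂ : ∀ r ∈ Icc 0 t, lieDeriv V₂ Φ (c₂ r) ≤ t * K₁₂ + r * K₂₂ := fun r hr => by
    have := sub_le_sub_of_lieDeriv_le hQ hr.1 (fun σ hσ => hc₂ σ (hsub r hr hσ))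
      (fun σ _ => hlin K₂₂ σ) (fun σ hσ => h₂₂ σ (hsub r hr hσ))
    rw [hc₂₀] at this
    linarith
  have hΦc₁ := sub_le_sub_of_lieDeriv_le hΦ ht hc₁ (fun σ _ => hquad 0 K₁₁ σ)
    (fun σ hσ => (hPc₁ σ hσ).trans_eq (zero_add _).symm)
  have hΦc₂ := sub_le_sub_of_lieDeriv_le hΦ ht hc₂ (fun σ _ => hquad (t * K₁₂) K₂₂ σ) hQc₂
  rw [hc₂₀] at hΦc₂
  linarith

theorem eventually_forall_Icc {p : ℝ → Prop} {a : ℝ} (h : ∀ᶠ s in 𝓝 a, p s) :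
    ∀ᶠ t in 𝓝[>] a, ∀ s ∈ Icc a t, p s := by
  obtain ⟨δ, hδ, hball⟩ := Metric.eventually_nhds_iff_ball.1 h
  filter_upwards [Ioo_mem_nhdsGT (lt_add_of_pos_right a hδ)] with t ht s hs
  apply hball
  rw [Real.ball_eq_Ioo]
  exact ⟨by linarith [hs.1], by linarith [hs.2, ht.2]⟩

theorem eventually_forall_Icc_Icc {p : ℝ × ℝ → Prop} {a : ℝ} (h : ∀ᶠ q in 𝓝 (a, a), p q) :
    ∀ᶠ t in 𝓝[>] a, ∀ s ∈ Icc a t, ∀ r ∈ Icc a t, p (s, r) := by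
  rw [nhds_prod_eq] at h
  obtain ⟨p₁, hp₁, p₂, hp₂, hp⟩ := eventually_prod_iff.1 h
  filter_upwards [eventually_forall_Icc hp₁, eventually_forall_Icc hp₂] with t h₁ h₂ s hs r hr
  exact hp (h₁ s hs) (h₂ r hr)

theorem eventually_lt_of_concatSecondCoeff_neg {V₁ V₂ : E → E} {Φ : E → ℝ} {x₀ : E}
    (hΦ : ContDiff ℝ 2 Φ) (hV₁ : ContDiff ℝ 1 V₁) (hV₂ : ContDiff ℝ 1 V₂)
    (hP₀ : lieDeriv V₁ Φ x₀ = 0) (hQ₀ : lieDeriv V₂ Φ x₀ = 0)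
    (hneg : concatSecondCoeff V₁ V₂ Φ x₀ < 0)
    {γ : ℝ → E} {χ : ℝ → ℝ → E} (hγ₀ : γ 0 = x₀) (hγ : ∀ᶠ s in 𝓝 0, HasDerivAt γ (V₁ (γ s)) s)
    (hχ₀ : ∀ s, χ s 0 = γ s)
    (hχ : ∀ᶠ q in 𝓝 (0, 0), HasDerivAt (χ q.1) (V₂ (χ q.1 q.2)) q.2)
    (hχc : ContinuousAt (Function.uncurry χ) (0, 0)) :
    ∀ᶠ t in 𝓝[>] 0, Φ (χ t t) < Φ x₀ := by
  set ε := -concatSecondCoeff V₁ V₂ Φ x₀ / 8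
  have hε : 0 < ε := by dsimp only [ε]; linarith
  have hP := hΦ.lieDeriv (n := 1) hV₁
  have hQ := hΦ.lieDeriv (n := 1) hV₂
  have hnear : ∀ W : E → ℝ, ContDiff ℝ 0 W → ∀ᶠ q in 𝓝 (0, 0), W (χ q.1 q.2) < W x₀ + ε :=
    fun W hW => (hW.continuous.continuousAt.tendsto.comp (hχc.trans (by simp [hχ₀, hγ₀])))
      |>.eventually_lt_const (lt_add_of_pos_right _ hε)
  filter_upwards [eventually_forall_Icc hγ, self_mem_nhdsWithin,
    eventually_forall_Icc_Icc (hχ.and ((hnear _ (hP.lieDeriv (n := 0) hV₁.of_succ)).and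
      ((hnear _ (hQ.lieDeriv (n := 0) hV₁.of_succ)).and
        (hnear _ (hQ.lieDeriv (n := 0) hV₂.of_succ)))))] with t hγt (ht : 0 < t) hbox
  have hbound := sub_le_of_second_lieDeriv_le (hΦ.differentiable two_ne_zero)
    (hP.differentiable one_ne_zero) (hQ.differentiable one_ne_zero) ht.le hγt
    (fun r hr => (hbox t ⟨ht.le, le_rfl⟩ r hr).1) (hχ₀ t) (hγ₀ ▸ hP₀) (hγ₀ ▸ hQ₀)
    (fun s hs => by simpa [hχ₀] using (hbox s hs 0 ⟨le_rfl, ht.le⟩).2.1.le)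
    (fun s hs => by simpa [hχ₀] using (hbox s hs 0 ⟨le_rfl, ht.le⟩).2.2.1.le)
    (fun r hr => (hbox t ⟨ht.le, le_rfl⟩ r hr).2.2.2.le)
  rw [hγ₀] at hbound
  have hhalf : Φ (χ t t) - Φ x₀ ≤ t ^ 2 / 4 * concatSecondCoeff V₁ V₂ Φ x₀ := by
    refine hbound.trans_eq ?_
    simp only [ε, concatSecondCoeff]
    ring
  linarith [mul_neg_of_pos_of_neg (by positivity : 0 < t ^ 2 / 4) hneg]

theorem ContDiffAt.exists_flow_continuousAt [CompleteSpace E] {V : E → E} {x₀ : E}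
    (hV : ContDiffAt ℝ 1 V x₀) :
    ∃ α : E × ℝ → E, (∀ x, α (x, 0) = x) ∧ ContinuousAt α (x₀, 0) ∧
      ∀ᶠ q in 𝓝 (x₀, 0), HasDerivAt (fun t => α (q.1, t)) (V (α q)) q.2 := by
  obtain ⟨ε, hε, a, r, L, K, hr, hpl⟩ := IsPicardLindelof.of_contDiffAt_one hV
  obtain ⟨α, hα, hαc⟩ := (hpl 0).exists_forall_mem_closedBall_eq_hasDerivWithinAt_continuousOn
  simp only [zero_sub, zero_add] at hα hαc
  classical
  have hU : closedBall x₀ r ×ˢ Ioo (-ε) ε ∈ 𝓝 (x₀, (0 : ℝ)) :=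
    prod_mem_nhds (closedBall_mem_nhds x₀ hr) (Ioo_mem_nhds (neg_neg_iff_pos.2 hε) hε)
  refine ⟨fun q => if q.1 ∈ closedBall x₀ r then α q else q.1, fun x => ?_, ?_, ?_⟩
  · dsimp only
    split_ifs with hx
    exacts [(hα x hx).1, rfl]
  · refine ContinuousAt.congr ?_ (eventually_of_mem hU fun q hq => (if_pos hq.1).symm)
    exact (hαc (x₀, 0) ⟨mem_closedBall_self r.2, neg_nonpos.2 hε.le, hε.le⟩).continuousAt
      (mem_of_superset hU (prod_mono subset_rfl Ioo_subset_Icc_self))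
  · filter_upwards [hU] with q hq
    simp only [if_pos hq.1]
    exact ((hα q.1 hq.1).2 q.2 (Ioo_subset_Icc_self hq.2)).hasDerivAt
      (Icc_mem_nhds hq.2.1 hq.2.2)

theorem case3_decrease_general {n : ℕ}
    (f g : EuclideanSpace ℝ (Fin n) → EuclideanSpace ℝ (Fin n))
    (hf : ContDiff ℝ 2 f) (hg : ContDiff ℝ 2 g)
    (Φ : EuclideanSpace ℝ (Fin n) → ℝ) (hΦ : ContDiff ℝ 2 Φ)
    (x₀ : EuclideanSpace ℝ (Fin n))
    (hgΦ : fderiv ℝ Φ x₀ (g x₀) = 0)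
    (hfΦ : fderiv ℝ Φ x₀ (f x₀) = 0)
    (hLie : fderiv ℝ Φ x₀ (fderiv ℝ g x₀ (f x₀) - fderiv ℝ f x₀ (g x₀)) ≠ 0) :
    ∃ u₁ u₂ tbar : ℝ, 0 < tbar ∧
      ∃ γ : ℝ → EuclideanSpace ℝ (Fin n),
      ∃ α : ℝ → EuclideanSpace ℝ (Fin n) → EuclideanSpace ℝ (Fin n),
        γ 0 = x₀ ∧
        (∀ t ∈ Set.Icc (0:ℝ) tbar, HasDerivAt γ (f (γ t) + u₁ • g (γ t)) t) ∧
        (∀ z, α 0 z = z) ∧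
        (∀ s ∈ Set.Icc (0:ℝ) tbar, ∀ t ∈ Set.Icc (0:ℝ) tbar,
          HasDerivAt (fun r => α r (γ s)) (f (α t (γ s)) + u₂ • g (α t (γ s))) t) ∧
        (∀ t ∈ Set.Ioc (0:ℝ) tbar, Φ (α t (γ t)) < Φ x₀) := by
  obtain ⟨u, hneg⟩ := exists_concatSecondCoeff_neg hΦ.contDiffAt
    (hf.differentiable two_ne_zero x₀) (hg.differentiable two_ne_zero x₀) hLie
  set V₁ := f + (-u) • g
  set V₂ := f + u • g
  have hV₁ : ContDiff ℝ 1 V₁ := (hf.of_le one_le_two).add ((hg.of_le one_le_two).const_smul (-u))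
  have hV₂ : ContDiff ℝ 1 V₂ := (hf.of_le one_le_two).add ((hg.of_le one_le_two).const_smul u)
  have hP₀ : lieDeriv V₁ Φ x₀ = 0 := by simp [V₁, lieDeriv, hfΦ, hgΦ]
  have hQ₀ : lieDeriv V₂ Φ x₀ = 0 := by simp [V₂, lieDeriv, hfΦ, hgΦ]
  obtain ⟨γ, hγ₀, ε, hε, hγ⟩ :=
    (hV₁.contDiffAt (x := x₀)).exists_forall_mem_closedBall_exists_eq_forall_mem_Ioo_hasDerivAt₀ 0
  obtain ⟨α, hα₀, hαc, hα⟩ := hV₂.contDiffAt.exists_flow_continuousAt (x₀ := x₀)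
  have hγ' : ∀ᶠ s in 𝓝 0, HasDerivAt γ (V₁ (γ s)) s :=
    eventually_of_mem (Ioo_mem_nhds (by linarith) (by linarith)) hγ
  have hmapc : ContinuousAt (fun q : ℝ × ℝ => (γ q.1, q.2)) (0, 0) :=
    (hγ'.self_of_nhds.continuousAt.comp_of_eq continuousAt_fst rfl).prodMk continuousAt_snd
  have hmap : Tendsto (fun q : ℝ × ℝ => (γ q.1, q.2)) (𝓝 (0, 0)) (𝓝 (x₀, 0)) := by
    simpa [hγ₀] using hmapc.tendsto
  have hχ := hmap.eventually hα
  have hdec := eventually_lt_of_concatSecondCoeff_neg (χ := fun s r => α (γ s, r)) hΦ hV₁ hV₂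
    hP₀ hQ₀ hneg hγ₀ hγ' (fun s => hα₀ _) hχ (hαc.comp_of_eq hmapc (by simp [hγ₀]))
  obtain ⟨tbar, htbar, hsub⟩ := mem_nhdsGT_iff_exists_Ioc_subset.1
    (hdec.and ((eventually_forall_Icc hγ').and (eventually_forall_Icc_Icc hχ)))
  obtain ⟨-, hγtbar, hχtbar⟩ := hsub ⟨htbar, le_rfl⟩
  exact ⟨-u, u, tbar, htbar, γ, fun r z => α (z, r), hγ₀, hγtbar, hα₀, hχtbar,
    fun t ht => (hsub ht).1⟩

/-- Case 3 in the proof of Proposition 2: if `(gΦ)(x₀) = 0`, `(fΦ)(x₀) = 0` and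
`([f,g]Φ)(x₀) ≠ 0` at some `x₀ ≠ 0`, then there are constants `u₁, u₂` and `t̄ > 0` such
that `Φ((X_t ∘ Y_t)(x₀)) < Φ(x₀)` for all `t ∈ (0, t̄]`, where `Y` is the flow of
`f + u₁ g` starting at `x₀` and `X` the flow of `f + u₂ g`. -/
theorem case3_decrease {n : ℕ}
    (f g : EuclideanSpace ℝ (Fin n) → EuclideanSpace ℝ (Fin n))
    (hf : ContDiff ℝ 2 f) (hg : ContDiff ℝ 2 g)
    (Φ : EuclideanSpace ℝ (Fin n) → ℝ) (hΦ : ContDiff ℝ 2 Φ)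
    (x₀ : EuclideanSpace ℝ (Fin n)) (hx₀ : x₀ ≠ 0)
    (hgΦ : fderiv ℝ Φ x₀ (g x₀) = 0)
    (hfΦ : fderiv ℝ Φ x₀ (f x₀) = 0)
    (hLie : fderiv ℝ Φ x₀ (fderiv ℝ g x₀ (f x₀) - fderiv ℝ f x₀ (g x₀)) ≠ 0) :
    ∃ u₁ u₂ tbar : ℝ, 0 < tbar ∧
      ∃ γ : ℝ → EuclideanSpace ℝ (Fin n),
      ∃ α : ℝ → EuclideanSpace ℝ (Fin n) → EuclideanSpace ℝ (Fin n),
        γ 0 = x₀ ∧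
        (∀ t ∈ Set.Icc (0:ℝ) tbar, HasDerivAt γ (f (γ t) + u₁ • g (γ t)) t) ∧
        (∀ z, α 0 z = z) ∧
        (∀ s ∈ Set.Icc (0:ℝ) tbar, ∀ t ∈ Set.Icc (0:ℝ) tbar,
          HasDerivAt (fun r => α r (γ s)) (f (α t (γ s)) + u₂ • g (α t (γ s))) t) ∧
        (∀ t ∈ Set.Ioc (0:ℝ) tbar, Φ (α t (γ t)) < Φ x₀) :=
  case3_decrease_general f g hf hg Φ hΦ x₀ hgΦ hfΦ hLie
end
end

section
/- Consider the planar system ẋ = f(x) + u g(x) on ℝ² with f(x) := (a(x₁,x₂), a(x₁,x₂))ᵀ and g(x) := (x₁, −x₂)ᵀ, where a : ℝ² → ℝ is C¹ and satisfies a(0,0) = 0, x₁·a(x₁,x₁) < 0 for every x₁ ≠ 0, and a(x₁,−x₁) ≠ 0 for every x₁ ≠ 0. Then condition (3.1) holds with Φ(x) = ½(x₁² + x₂²): for every x ≠ 0 with (gΦ)(x) = 0, either (fΦ)(x) < 0, or (fΦ)(x) = 0 and ([f,g]Φ)(x) ≠ 0. -/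
/-!
Here `gΦ(x) = x₁² - x₂²`, which vanishes exactly on the two diagonals `x₂ = ±x₁`.
On `x₂ = x₁` we get `fΦ(x) = 2 x₁ a(x₁, x₁) < 0`. On `x₂ = -x₁` we get `fΦ(x) = 0`, and
`[f,g]Φ(x) = 2 x₁ a(x₁, -x₁) ≠ 0`: the term `Df(x) g(x)` lies on the diagonal, which is
`DΦ(x)`-orthogonal at antidiagonal points, so the derivative of `a` drops out.
-/

theorem fderiv_half_sq_add_sq_apply (p v : ℝ × ℝ) :
    fderiv ℝ (fun p : ℝ × ℝ => (p.1 ^ 2 + p.2 ^ 2) / 2) p v = p.1 * v.1 + p.2 * v.2 := by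
  have h : HasFDerivAt (fun p : ℝ × ℝ => (p.1 ^ 2 + p.2 ^ 2) * 2⁻¹) _ p :=
    HasFDerivAt.mul_const
      (HasFDerivAt.fun_add (HasFDerivAt.pow (hasFDerivAt_fst (𝕜 := ℝ) (p := p)) 2)
        (HasFDerivAt.pow (hasFDerivAt_snd (𝕜 := ℝ) (p := p)) 2)) 2⁻¹
  simp only [← div_eq_mul_inv] at h
  rw [h.fderiv]
  simp only [Nat.add_one_sub_one, pow_one, nsmul_eq_mul, Nat.cast_ofNat, smul_add,
    add_apply, smul_apply, ContinuousLinearMap.coe_fst',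
    ContinuousLinearMap.coe_snd', smul_eq_mul]
  ring

theorem fderiv_fst_neg_snd_apply (p v : ℝ × ℝ) :
    fderiv ℝ (fun p : ℝ × ℝ => (p.1, -p.2)) p v = (v.1, -v.2) := by
  have h : HasFDerivAt (fun p : ℝ × ℝ => (p.1, -p.2)) _ p :=
    ((ContinuousLinearMap.fst ℝ ℝ ℝ).prod (-ContinuousLinearMap.snd ℝ ℝ ℝ)).hasFDerivAt
  rw [h.fderiv]
  rfl

theorem fderiv_diag_apply {𝕜 E F : Type*} [NontriviallyNormedField 𝕜]
    [NormedAddCommGroup E] [NormedSpace 𝕜 E] [NormedAddCommGroup F] [NormedSpace 𝕜 F]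
    {a : E → F} {p : E} (ha : DifferentiableAt 𝕜 a p) (v : E) :
    fderiv 𝕜 (fun x => (a x, a x)) p v = (fderiv 𝕜 a p v, fderiv 𝕜 a p v) := by
  rw [ha.fderiv_prodMk ha]
  rfl

theorem example1_general (a : ℝ × ℝ → ℝ) (ha : ContDiff ℝ 1 a)
    (ha1 : ∀ x₁ : ℝ, x₁ ≠ 0 → x₁ * a (x₁, x₁) < 0)
    (ha2 : ∀ x₁ : ℝ, x₁ ≠ 0 → a (x₁, -x₁) ≠ 0)
    (f g : ℝ × ℝ → ℝ × ℝ)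
    (hfdef : f = fun p => (a p, a p))
    (hgdef : g = fun p => (p.1, -p.2))
    (Φ : ℝ × ℝ → ℝ)
    (hΦdef : Φ = fun p => (p.1 ^ 2 + p.2 ^ 2) / 2) :
    ∀ p : ℝ × ℝ, p ≠ 0 → fderiv ℝ Φ p (g p) = 0 →
      (fderiv ℝ Φ p (f p) < 0 ∨
        (fderiv ℝ Φ p (f p) = 0 ∧
          fderiv ℝ Φ p (fderiv ℝ g p (f p) - fderiv ℝ f p (g p)) ≠ 0)) := by
  subst hfdef hgdef hΦdef
  rintro ⟨x, y⟩ hp hgΦ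
  simp only [fderiv_half_sq_add_sq_apply] at hgΦ ⊢
  have hdiag : y = x ∨ y = -x := sq_eq_sq_iff_eq_or_eq_neg.mp (by linear_combination -hgΦ)
  rcases hdiag with rfl | rfl
  · have hy : y ≠ 0 := fun h => hp (by simp [h])
    left
    linarith [ha1 y hy]
  · have hx : x ≠ 0 := fun h => hp (by simp [h])
    right
    refine ⟨by ring, ?_⟩
    rw [fderiv_fst_neg_snd_apply, fderiv_diag_apply (ha.differentiable one_ne_zero _)]
    convert mul_ne_zero (mul_ne_zero two_ne_zero hx) (ha2 x hx) using 1
    simp only [neg_neg, Prod.mk_sub_mk]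
    ring

/-- Example 1: for the planar system with `f(x) = (a(x₁,x₂), a(x₁,x₂))ᵀ`,
`g(x) = (x₁, −x₂)ᵀ`, where `a` is `C¹` with `a(0,0) = 0`, `x₁·a(x₁,x₁) < 0` for `x₁ ≠ 0`
and `a(x₁,−x₁) ≠ 0` for `x₁ ≠ 0`, condition (3.1) holds with `Φ(x) = ½(x₁² + x₂²)`. -/
theorem example1 (a : ℝ × ℝ → ℝ) (ha : ContDiff ℝ 1 a)
    (ha0 : a (0, 0) = 0)
    (ha1 : ∀ x₁ : ℝ, x₁ ≠ 0 → x₁ * a (x₁, x₁) < 0)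
    (ha2 : ∀ x₁ : ℝ, x₁ ≠ 0 → a (x₁, -x₁) ≠ 0)
    (f g : ℝ × ℝ → ℝ × ℝ)
    (hfdef : f = fun p => (a p, a p))
    (hgdef : g = fun p => (p.1, -p.2))
    (Φ : ℝ × ℝ → ℝ)
    (hΦdef : Φ = fun p => (p.1 ^ 2 + p.2 ^ 2) / 2) :
    ∀ p : ℝ × ℝ, p ≠ 0 → fderiv ℝ Φ p (g p) = 0 →
      (fderiv ℝ Φ p (f p) < 0 ∨
        (fderiv ℝ Φ p (f p) = 0 ∧
          fderiv ℝ Φ p (fderiv ℝ g p (f p) - fderiv ℝ f p (g p)) ≠ 0)) :=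
  example1_general a ha ha1 ha2 f g hfdef hgdef Φ hΦdef
end

section
/- Let G, H : ℝ≥0 → ℝ≥0 be continuous, strictly increasing, bounded functions with G(0) = H(0) = 0, G(s) < H(s) for all s > 0, and lim_{s→∞} H(s) > r := lim_{s→∞} G(s). Then there exist bounded functions ℓ₁, ℓ₂ of class K which are C¹ on (0, ∞) such that G(s) < ℓ₁(s) < ℓ₂(s) < H(s) for all s > 0 and r < lim_{t→∞} ℓ₁(t) ≤ lim_{t→∞} ℓ₂(t); in particular ℓ_i(s) < lim_{t→∞} ℓ_i(t) for all s ≥ 0 and i = 1, 2. -/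
/-!
The functions `ℓ` are trailing averages `ℓ s = ⨍ t in s - w s..s, H t`. Since `H` is continuous
and strictly increasing, `H (s - w s) < ℓ s < H s`; `ℓ` is strictly increasing as long as
`s - w s` is nondecreasing, it is `C¹` as soon as the width `w` is, and it tends to `lim H`.
Halving the width moves the window to the right, which gives `ℓ₁ < ℓ₂ < H`.

To get `G < ℓ₁`, compactness and `lim G < lim H` yield a positive nondecreasing margin `δ` with
`G s ≤ H (s - v)` whenever `0 ≤ v < δ s`. The width has to stay below `δ`, be `C¹` and have
derivative `< 1`; averaging `min δ id / 2` twice over `[s/2, s]` achieves this.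
-/

open Filter Set

noncomputable section

/-- A function of class `K`: continuous, strictly increasing on `[0,∞)` and vanishing at `0`. -/
def IsClassK (φ : ℝ → ℝ) : Prop :=
  ContinuousOn φ (Set.Ici 0) ∧ StrictMonoOn φ (Set.Ici 0) ∧ φ 0 = 0

open MeasureTheory intervalIntegral Topology

section IntervalAverage

variable {f : ℝ → ℝ} {a b c m : ℝ}

lemma le_interval_average (hab : a < b) (hf : IntervalIntegrable f volume a b)
    (h : ∀ t ∈ Icc a b, m ≤ f t) : m ≤ ⨍ t in a..b, f t := by
  rw [interval_average_eq_div, le_div_iff₀ (sub_pos.2 hab)]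
  simpa [mul_comm] using integral_mono_on hab.le intervalIntegrable_const hf h

lemma interval_average_le (hab : a < b) (hf : IntervalIntegrable f volume a b)
    (h : ∀ t ∈ Icc a b, f t ≤ m) : (⨍ t in a..b, f t) ≤ m := by
  rw [interval_average_eq_div, div_le_iff₀ (sub_pos.2 hab)]
  simpa [mul_comm] using integral_mono_on hab.le hf intervalIntegrable_const h

lemma StrictMonoOn.interval_average_mem_Ioo (hf : StrictMonoOn f (Icc a b))
    (hc : ContinuousOn f (Icc a b)) (hab : a < b) : (⨍ t in a..b, f t) ∈ Ioo (f a) (f b) := by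
  have ha : a ∈ Icc a b := left_mem_Icc.2 hab.le
  have hb : b ∈ Icc a b := right_mem_Icc.2 hab.le
  rw [interval_average_eq_div, mem_Ioo, lt_div_iff₀ (sub_pos.2 hab),
    div_lt_iff₀ (sub_pos.2 hab)]
  constructor
  · simpa [mul_comm] using integral_lt_integral_of_continuousOn_of_le_of_exists_lt hab
      continuousOn_const hc (fun t ht => hf.monotoneOn ha (Ioc_subset_Icc_self ht) ht.1.le)
      ⟨b, hb, hf ha hb hab⟩
  · simpa [mul_comm] using integral_lt_integral_of_continuousOn_of_le_of_exists_lt hab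
      hc continuousOn_const (fun t ht => hf.monotoneOn (Ioc_subset_Icc_self ht) hb ht.2)
      ⟨a, ha, hf ha hb hab⟩

-- The average over `[a, b]` is a convex combination of those over `[a, c]` and `[c, b]`.
lemma interval_average_mem_Ioo_of_lt (hac : a < c) (hcb : c < b)
    (hf : IntervalIntegrable f volume a b)
    (hlt : (⨍ t in a..c, f t) < ⨍ t in c..b, f t) :
    (⨍ t in a..b, f t) ∈ Ioo (⨍ t in a..c, f t) (⨍ t in c..b, f t) := by
  have hc : c ∈ uIcc a b := mem_uIcc_of_le hac.le hcb.le
  have hsplit : (∫ t in a..b, f t) = (∫ t in a..c, f t) + ∫ t in c..b, f t :=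
    (integral_add_adjacent_intervals (hf.mono_set (uIcc_subset_uIcc left_mem_uIcc hc))
      (hf.mono_set (uIcc_subset_uIcc hc right_mem_uIcc))).symm
  simp only [interval_average_eq_div, mem_Ioo] at hlt ⊢
  rw [div_lt_div_iff₀ (by linarith) (by linarith)] at hlt
  rw [hsplit, div_lt_div_iff₀ (by linarith) (by linarith),
    div_lt_div_iff₀ (by linarith) (by linarith)]
  constructor <;> nlinarith

lemma StrictMonoOn.interval_average_mem_Ioo_of_mem_Ioo (hf : StrictMonoOn f (Icc a b))
    (hc : ContinuousOn f (Icc a b)) (hcab : c ∈ Ioo a b) :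
    (⨍ t in a..b, f t) ∈ Ioo (⨍ t in a..c, f t) (⨍ t in c..b, f t) := by
  obtain ⟨hac, hcb⟩ := hcab
  have hleft : Icc a c ⊆ Icc a b := Icc_subset_Icc_right hcb.le
  have hright : Icc c b ⊆ Icc a b := Icc_subset_Icc_left hac.le
  refine interval_average_mem_Ioo_of_lt hac hcb
    (hc.intervalIntegrable_of_Icc (hac.trans hcb).le) ?_
  calc (⨍ t in a..c, f t) < f c :=
        ((hf.mono hleft).interval_average_mem_Ioo (hc.mono hleft) hac).2
    _ < ⨍ t in c..b, f t := ((hf.mono hright).interval_average_mem_Ioo (hc.mono hright) hcb).1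

end IntervalAverage

lemma contDiffOn_one_of_hasDerivAt {f f' : ℝ → ℝ} {s : Set ℝ} (hs : IsOpen s)
    (hf : ∀ x ∈ s, HasDerivAt f (f' x) x) (hf' : ContinuousOn f' s) : ContDiffOn ℝ 1 f s := by
  rw [show (1 : WithTop ℕ∞) = 0 + 1 from rfl, contDiffOn_succ_iff_deriv_of_isOpen hs]
  refine ⟨fun x hx => (hf x hx).differentiableAt.differentiableWithinAt, by simp, ?_⟩
  exact contDiffOn_zero.2 (hf'.congr fun x hx => (hf x hx).deriv)

section Primitive

variable {f : ℝ → ℝ} {c : ℝ}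

lemma hasDerivAt_integral_of_continuousOn_Ioi (hf : ContinuousOn f (Ioi 0)) (hc : 0 < c)
    {x : ℝ} (hx : 0 < x) : HasDerivAt (fun y => ∫ t in c..y, f t) (f x) x := by
  refine integral_hasDerivAt_right ?_ (hf.stronglyMeasurableAtFilter isOpen_Ioi x hx)
    (hf.continuousAt (Ioi_mem_nhds hx))
  exact (hf.mono fun t ht => lt_of_lt_of_le (lt_min hc hx) ht.1).intervalIntegrable

lemma contDiffOn_integral_of_continuousOn_Ioi (hf : ContinuousOn f (Ioi 0)) (hc : 0 < c) :
    ContDiffOn ℝ 1 (fun y => ∫ t in c..y, f t) (Ioi 0) :=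
  contDiffOn_one_of_hasDerivAt isOpen_Ioi
    (fun _ hx => hasDerivAt_integral_of_continuousOn_Ioi hf hc hx) hf

end Primitive

def trailingAverage (f w : ℝ → ℝ) (s : ℝ) : ℝ := ⨍ t in s - w s..s, f t

structure IsWindowWidth (w : ℝ → ℝ) : Prop where
  zero : w 0 = 0
  pos : ∀ s, 0 < s → 0 < w s
  le_half : ∀ s, 0 < s → w s ≤ s / 2
  contDiffOn : ContDiffOn ℝ 1 w (Ioi 0)
  monotoneOn_sub : MonotoneOn (fun s => s - w s) (Ioi 0)

namespace IsWindowWidth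

variable {w : ℝ → ℝ} {s : ℝ}

lemma half_le_sub (hw : IsWindowWidth w) (hs : 0 < s) : s / 2 ≤ s - w s := by
  linarith [hw.le_half s hs]

lemma sub_pos (hw : IsWindowWidth w) (hs : 0 < s) : 0 < s - w s :=
  lt_of_lt_of_le (half_pos hs) (hw.half_le_sub hs)

lemma sub_lt (hw : IsWindowWidth w) (hs : 0 < s) : s - w s < s :=
  sub_lt_self s (hw.pos s hs)

lemma div_two (hw : IsWindowWidth w) : IsWindowWidth (fun s => w s / 2) where
  zero := by simp [hw.zero]
  pos s hs := half_pos (hw.pos s hs)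
  le_half s hs := by linarith [hw.le_half s hs, hw.pos s hs]
  contDiffOn := hw.contDiffOn.div_const 2
  monotoneOn_sub x hx y hy hxy := by
    linarith [hw.monotoneOn_sub hx hy hxy]

end IsWindowWidth

lemma isWindowWidth_half : IsWindowWidth (· / 2) where
  zero := zero_div 2
  pos _ hs := half_pos hs
  le_half _ _ := le_rfl
  contDiffOn := contDiffOn_id.div_const 2
  monotoneOn_sub x _ y _ hxy := by linarith

section TrailingAverage

variable {f w : ℝ → ℝ} {s : ℝ}

-- The average over the degenerate window `[0, 0]` is `0` by convention.
lemma trailingAverage_zero (hw : IsWindowWidth w) : trailingAverage f w 0 = 0 := by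
  simp [trailingAverage, hw.zero]

lemma trailingAverage_half : trailingAverage f (· / 2) s = ⨍ t in s / 2..s, f t := by
  rw [trailingAverage, sub_half]

lemma trailingAverage_eq_sub_div {c : ℝ} (hs : IntervalIntegrable f volume c s)
    (hsw : IntervalIntegrable f volume c (s - w s)) :
    trailingAverage f w s = ((∫ t in c..s, f t) - ∫ t in c..s - w s, f t) / w s := by
  rw [trailingAverage, interval_average_eq_div, sub_sub_cancel,
    integral_interval_sub_left hs hsw]

lemma continuousOn_trailingAverage_of_monotone (hf : Monotone f) (hw : IsWindowWidth w) :
    ContinuousOn (trailingAverage f w) (Ioi 0) := by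
  have hi : ∀ a b, IntervalIntegrable f volume a b := fun _ _ => hf.intervalIntegrable
  have hP := continuous_primitive hi 0
  have hwc := hw.contDiffOn.continuousOn
  refine ((hP.continuousOn.sub (hP.comp_continuousOn (continuousOn_id.sub hwc))).div hwc
    fun s hs => (hw.pos s hs).ne').congr fun s _ => ?_
  exact trailingAverage_eq_sub_div (hi _ _) (hi _ _)

lemma contDiffOn_trailingAverage (hf : ContinuousOn f (Ioi 0)) (hw : IsWindowWidth w) :
    ContDiffOn ℝ 1 (trailingAverage f w) (Ioi 0) := by
  have hF := contDiffOn_integral_of_continuousOn_Ioi hf one_pos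
  have hi : ∀ x, 0 < x → IntervalIntegrable f volume 1 x := fun x hx =>
    (hf.mono fun t ht => lt_of_lt_of_le (lt_min one_pos hx) ht.1).intervalIntegrable
  refine ((hF.sub (hF.comp (contDiffOn_id.sub hw.contDiffOn) fun s hs => hw.sub_pos hs)).div
    hw.contDiffOn fun s hs => (hw.pos s hs).ne').congr fun s hs => ?_
  exact trailingAverage_eq_sub_div (hi s hs) (hi _ (hw.sub_pos hs))

lemma hasDerivAt_trailingAverage_half (hf : ContinuousOn f (Ioi 0)) (hs : 0 < s) :
    HasDerivAt (trailingAverage f (· / 2))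
      ((2 * f s - f (s / 2) - trailingAverage f (· / 2) s) / s) s := by
  set F : ℝ → ℝ := fun y => ∫ t in (1 : ℝ)..y, f t
  have hi : ∀ x, 0 < x → IntervalIntegrable f volume 1 x := fun x hx =>
    (hf.mono fun t ht => lt_of_lt_of_le (lt_min one_pos hx) ht.1).intervalIntegrable
  have heq : ∀ x, 0 < x → trailingAverage f (· / 2) x = (F x - F (x / 2)) / (x / 2) := by
    intro x hx
    simpa only [sub_half] using trailingAverage_eq_sub_div (w := (· / 2)) (hi x hx)
      (by rw [sub_half]; exact hi _ (half_pos hx))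
  have hF : HasDerivAt (fun x => (F x - F (x / 2)) / (x / 2))
      (((f s - f (s / 2) * (1 / 2)) * (s / 2) - (F s - F (s / 2)) * (1 / 2)) / (s / 2) ^ 2)
      s := by
    have hhalf : HasDerivAt (fun x : ℝ => x / 2) (1 / 2) s := (hasDerivAt_id s).div_const 2
    have hFhalf :=
      (hasDerivAt_integral_of_continuousOn_Ioi hf one_pos (half_pos hs)).comp s hhalf
    exact ((hasDerivAt_integral_of_continuousOn_Ioi hf one_pos hs).sub hFhalf).div hhalf
      (half_pos hs).ne'
  refine (hF.congr_of_eventuallyEq ?_).congr_deriv ?_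
  · filter_upwards [Ioi_mem_nhds hs] with x hx using heq x hx
  · rw [heq s hs]
    field_simp

end TrailingAverage

lemma isWindowWidth_trailingAverage_half {a : ℝ → ℝ} (ha : ContinuousOn a (Ioi 0))
    (ha_pos : ∀ s, 0 < s → 0 < a s) (ha_le : ∀ s, 0 < s → a s ≤ s / 2) :
    IsWindowWidth (trailingAverage a (· / 2)) := by
  have hai : ∀ s, 0 < s → IntervalIntegrable a volume (s / 2) s := fun s hs =>
    (ha.mono fun t ht => (half_pos hs).trans_le ht.1).intervalIntegrable_of_Icc
      (half_lt_self hs).le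
  have hpos : ∀ s, 0 < s → 0 < trailingAverage a (· / 2) s := fun s hs => by
    rw [trailingAverage_half, interval_average_eq_div]
    exact div_pos (intervalIntegral_pos_of_pos_on (hai s hs)
      (fun t ht => ha_pos t ((half_pos hs).trans ht.1)) (half_lt_self hs)) (by linarith)
  have hle : ∀ s, 0 < s → trailingAverage a (· / 2) s ≤ s / 2 := fun s hs => by
    rw [trailingAverage_half]
    exact interval_average_le (half_lt_self hs) (hai s hs) fun t ht =>
      (ha_le t ((half_pos hs).trans_le ht.1)).trans (by linarith [ht.2])
  have hC := contDiffOn_trailingAverage ha isWindowWidth_half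
  refine ⟨trailingAverage_zero isWindowWidth_half, hpos, hle, hC, ?_⟩
  refine monotoneOn_of_hasDerivWithinAt_nonneg
    (f' := fun s => 1 - (2 * a s - a (s / 2) - trailingAverage a (· / 2) s) / s)
    (convex_Ioi 0) (continuousOn_id.sub hC.continuousOn) (fun s hs => ?_) (fun s hs => ?_) <;>
    rw [interior_Ioi] at hs
  · rw [interior_Ioi]
    exact ((hasDerivAt_id s).sub (hasDerivAt_trailingAverage_half ha hs)).hasDerivWithinAt
  · rw [sub_nonneg, div_le_one hs]
    linarith [ha_le s hs, ha_pos (s / 2) (half_pos hs), hpos s hs]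

lemma exists_isWindowWidth_lt {δ : ℝ → ℝ} (hδ : Monotone δ) (hδ_pos : ∀ s, 0 < s → 0 < δ s) :
    ∃ w, IsWindowWidth w ∧ ∀ s, 0 < s → w s < δ s := by
  set v : ℝ → ℝ := fun s => min (δ s) s / 2
  have hv_mono : Monotone v := (hδ.min monotone_id).div_const zero_le_two
  have hv_pos : ∀ s, 0 < s → 0 < v s := fun s hs => half_pos (lt_min (hδ_pos s hs) hs)
  have hv_le : ∀ s, v s ≤ s / 2 := fun s => by
    show min (δ s) s / 2 ≤ s / 2
    linarith [min_le_right (δ s) s]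
  have hv_lt : ∀ s, 0 < s → v s < δ s := fun s hs => by
    show min (δ s) s / 2 < δ s
    linarith [min_le_left (δ s) s, hδ_pos s hs]
  -- One average of the monotone `v` is continuous, a second one is `C¹`.
  set a := trailingAverage v (· / 2)
  have ha_cont : ContinuousOn a (Ioi 0) :=
    continuousOn_trailingAverage_of_monotone hv_mono isWindowWidth_half
  have ha_mem : ∀ s, 0 < s → v (s / 2) ≤ a s ∧ a s ≤ v s := fun s hs => by
    simp only [a, trailingAverage_half]
    exact ⟨le_interval_average (half_lt_self hs) hv_mono.intervalIntegrable fun t ht =>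
        hv_mono ht.1,
      interval_average_le (half_lt_self hs) hv_mono.intervalIntegrable fun t ht => hv_mono ht.2⟩
  refine ⟨_, isWindowWidth_trailingAverage_half ha_cont
    (fun s hs => (hv_pos _ (half_pos hs)).trans_le (ha_mem s hs).1)
    (fun s hs => (ha_mem s hs).2.trans (hv_le s)), fun s hs => lt_of_le_of_lt ?_ (hv_lt s hs)⟩
  rw [trailingAverage_half]
  exact interval_average_le (half_lt_self hs)
    ((ha_cont.mono fun t ht => (half_pos hs).trans_le ht.1).intervalIntegrable_of_Icc
      (half_lt_self hs).le)
    fun t ht => (ha_mem t ((half_pos hs).trans_le ht.1)).2.trans (hv_mono ht.2)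

section Margin

variable {G H : ℝ → ℝ} {c : ℝ}

lemma exists_uniform_margin (hG : ContinuousOn G (Ioi 0)) (hH : ContinuousOn H (Ioi 0))
    (hGH : ∀ s, 0 < s → G s < H s) (hGc : ∀ᶠ t in atTop, G t ≤ c)
    (hHc : ∀ᶠ t in atTop, c ≤ H t) {s : ℝ} (hs : 0 < s) :
    ∃ u, 0 < u ∧ u ≤ 1 ∧ ∀ t, s ≤ t → ∀ v ∈ Icc 0 u, G t ≤ H (t - v) := by
  obtain ⟨N, hN⟩ := eventually_atTop.1 (hGc.and hHc)
  have hcompact : ∀ᶠ v in 𝓝 (0 : ℝ), ∀ t ∈ Icc s (N + 1), G t < H (t - v) := by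
    refine isCompact_Icc.eventually_forall_of_forall_eventually fun t ht => ?_
    have ht0 : 0 < t := hs.trans_le ht.1
    have hHt : ContinuousAt (fun z : ℝ × ℝ => H (z.2 - z.1)) (0, t) :=
      ContinuousAt.comp (g := H) (by simpa using hH.continuousAt (Ioi_mem_nhds ht0))
        (by fun_prop)
    exact ((hG.continuousAt (Ioi_mem_nhds ht0)).comp continuousAt_snd).eventually_lt hHt
      (by simpa using hGH t ht0)
  obtain ⟨ε, hε, hball⟩ := Metric.eventually_nhds_iff.1 hcompact
  refine ⟨min (ε / 2) 1, by positivity, min_le_right _ _, fun t hst v hv => ?_⟩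
  rcases le_or_gt t (N + 1) with htN | hNt
  · refine (hball ?_ t ⟨hst, htN⟩).le
    rw [Real.dist_0_eq_abs, abs_of_nonneg hv.1]
    linarith [min_le_left (ε / 2) 1, hv.2]
  · have hv1 : v ≤ 1 := hv.2.trans (min_le_right _ _)
    exact (hN t (by linarith)).1.trans (hN (t - v) (by linarith)).2

lemma exists_monotone_margin (hG : ContinuousOn G (Ioi 0)) (hH : ContinuousOn H (Ioi 0))
    (hGH : ∀ s, 0 < s → G s < H s) (hGc : ∀ᶠ t in atTop, G t ≤ c)
    (hHc : ∀ᶠ t in atTop, c ≤ H t) :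
    ∃ δ : ℝ → ℝ, Monotone δ ∧ (∀ s, 0 < s → 0 < δ s) ∧
      ∀ s v, 0 ≤ v → v < δ s → G s ≤ H (s - v) := by
  set A : ℝ → Set ℝ := fun s => {u | u ≤ 1 ∧ ∀ t, s ≤ t → ∀ v ∈ Icc 0 u, G t ≤ H (t - v)}
  have hA_bdd : ∀ s, BddAbove (A s) := fun s => ⟨1, fun u hu => hu.1⟩
  -- every negative `u` lies in `A s`, vacuously
  have hA_ne : ∀ s, (A s).Nonempty := fun s =>
    ⟨-1, by norm_num, fun t _ v hv => absurd (hv.1.trans hv.2) (by norm_num)⟩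
  refine ⟨fun s => sSup (A s), fun s s' hss' => csSup_le_csSup (hA_bdd s') (hA_ne s) ?_,
    fun s hs => ?_, fun s v hv hvδ => ?_⟩
  · exact fun u hu => ⟨hu.1, fun t ht => hu.2 t (hss'.trans ht)⟩
  · obtain ⟨u, hu, hu1, hu'⟩ := exists_uniform_margin hG hH hGH hGc hHc hs
    exact hu.trans_le (le_csSup (hA_bdd s) ⟨hu1, hu'⟩)
  · obtain ⟨u, hu, hvu⟩ := exists_lt_of_lt_csSup (hA_ne s) hvδ
    exact hu.2 s le_rfl v ⟨hv, hvu.le⟩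

end Margin

lemma StrictMonoOn.lt_of_tendsto_atTop {f : ℝ → ℝ} {a L : ℝ} (hf : StrictMonoOn f (Ici a))
    (hL : Tendsto f atTop (𝓝 L)) {x : ℝ} (hx : a ≤ x) : f x < L := by
  have hx1 : a ≤ x + 1 := by linarith
  refine (hf hx hx1 (lt_add_one x)).trans_le (ge_of_tendsto hL ?_)
  filter_upwards [eventually_ge_atTop (x + 1)] with y hy using
    hf.monotoneOn hx1 (hx1.trans hy) hy

section StrictMonoAverage

variable {H w : ℝ → ℝ} {s : ℝ}

lemma trailingAverage_mem_Ioo (hH : ContinuousOn H (Ici 0)) (hHm : StrictMonoOn H (Ici 0))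
    (hsw : 0 ≤ s - w s) (hw : 0 < w s) : trailingAverage H w s ∈ Ioo (H (s - w s)) (H s) := by
  have hsub : Icc (s - w s) s ⊆ Ici 0 := fun t ht => hsw.trans ht.1
  exact (hHm.mono hsub).interval_average_mem_Ioo (hH.mono hsub) (sub_lt_self s hw)

lemma trailingAverage_lt_trailingAverage (hH : ContinuousOn H (Ici 0))
    (hHm : StrictMonoOn H (Ici 0)) {w₁ w₂ : ℝ → ℝ} (hsw : 0 ≤ s - w₁ s) (h₂ : 0 < w₂ s)
    (h₁₂ : w₂ s < w₁ s) : trailingAverage H w₁ s < trailingAverage H w₂ s := by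
  have hsub : Icc (s - w₁ s) s ⊆ Ici 0 := fun t ht => hsw.trans ht.1
  exact ((hHm.mono hsub).interval_average_mem_Ioo_of_mem_Ioo (hH.mono hsub)
    ⟨by linarith, by linarith⟩).2

namespace IsWindowWidth

lemma strictMonoOn_trailingAverage (hw : IsWindowWidth w) (hH : ContinuousOn H (Ici 0))
    (hHm : StrictMonoOn H (Ici 0)) (hH0 : H 0 = 0) :
    StrictMonoOn (trailingAverage H w) (Ici 0) := by
  intro x hx y hy hxy
  have hy0 : 0 < y := lt_of_le_of_lt hx hxy
  rcases (mem_Ici.1 hx).eq_or_lt with rfl | hx0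
  · rw [trailingAverage_zero hw, ← hH0]
    exact (hHm.monotoneOn self_mem_Ici (hw.sub_pos hy0).le (hw.sub_pos hy0).le).trans_lt
      (trailingAverage_mem_Ioo hH hHm (hw.sub_pos hy0).le (hw.pos y hy0)).1
  · have hsub : Icc (x - w x) y ⊆ Ici 0 := fun t ht => (hw.sub_pos hx0).le.trans ht.1
    have hHm' := hHm.mono hsub
    have hH' := hH.mono hsub
    calc trailingAverage H w x < ⨍ t in x - w x..y, H t :=
          (hHm'.interval_average_mem_Ioo_of_mem_Ioo hH' ⟨hw.sub_lt hx0, hxy⟩).1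
      _ ≤ trailingAverage H w y := by
          rcases (hw.monotoneOn_sub hx0 hy0 hxy.le).eq_or_lt with heq | hlt
          · rw [trailingAverage, ← show x - w x = y - w y from heq]
          · exact (hHm'.interval_average_mem_Ioo_of_mem_Ioo hH' ⟨hlt, hw.sub_lt hy0⟩).2.le

lemma continuousOn_trailingAverage (hw : IsWindowWidth w) (hH : ContinuousOn H (Ici 0))
    (hHm : StrictMonoOn H (Ici 0)) (hH0 : H 0 = 0) :
    ContinuousOn (trailingAverage H w) (Ici 0) := by
  intro x hx
  rcases (mem_Ici.1 hx).eq_or_lt with rfl | hx0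
  · have hH0' : Tendsto H (𝓝[Ici 0] 0) (𝓝 0) := by
      simpa only [ContinuousWithinAt, hH0] using hH 0 self_mem_Ici
    rw [ContinuousWithinAt, trailingAverage_zero hw]
    refine squeeze_zero' ?_ ?_ hH0'
    · filter_upwards [self_mem_nhdsWithin] with t ht
      exact trailingAverage_zero (f := H) hw ▸
        (hw.strictMonoOn_trailingAverage hH hHm hH0).monotoneOn self_mem_Ici ht ht
    · filter_upwards [self_mem_nhdsWithin] with t ht
      rcases (mem_Ici.1 ht).eq_or_lt with rfl | ht0
      · rw [trailingAverage_zero hw, hH0]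
      · exact (trailingAverage_mem_Ioo hH hHm (hw.sub_pos ht0).le (hw.pos t ht0)).2.le
  · exact ((contDiffOn_trailingAverage (hH.mono Ioi_subset_Ici_self) hw).continuousOn
      |>.continuousAt (Ioi_mem_nhds hx0)).continuousWithinAt

lemma isClassK_trailingAverage (hw : IsWindowWidth w) (hH : ContinuousOn H (Ici 0))
    (hHm : StrictMonoOn H (Ici 0)) (hH0 : H 0 = 0) : IsClassK (trailingAverage H w) :=
  ⟨hw.continuousOn_trailingAverage hH hHm hH0, hw.strictMonoOn_trailingAverage hH hHm hH0,
    trailingAverage_zero hw⟩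

lemma tendsto_trailingAverage (hw : IsWindowWidth w) (hH : ContinuousOn H (Ici 0))
    (hHm : StrictMonoOn H (Ici 0)) {R : ℝ} (hR : Tendsto H atTop (𝓝 R)) :
    Tendsto (trailingAverage H w) atTop (𝓝 R) := by
  have hsub : Tendsto (fun s => s - w s) atTop atTop := by
    refine tendsto_atTop_mono' atTop ?_ (tendsto_id.atTop_div_const two_pos)
    filter_upwards [eventually_gt_atTop 0] with s hs using hw.half_le_sub hs
  refine tendsto_of_tendsto_of_tendsto_of_le_of_le' (hR.comp hsub) hR ?_ ?_ <;>
    filter_upwards [eventually_gt_atTop 0] with s hs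
  · exact (trailingAverage_mem_Ioo hH hHm (hw.sub_pos hs).le (hw.pos s hs)).1.le
  · exact (trailingAverage_mem_Ioo hH hHm (hw.sub_pos hs).le (hw.pos s hs)).2.le

end IsWindowWidth

end StrictMonoAverage

theorem squeeze_classK_construction_general (G H : ℝ → ℝ)
    (hGK : IsClassK G) (hHK : IsClassK H)
    (hGH : ∀ s : ℝ, 0 < s → G s < H s)
    (r R : ℝ)
    (hGlim : Tendsto G atTop (nhds r))
    (hHlim : Tendsto H atTop (nhds R))
    (hrR : r < R) :
    ∃ ℓ₁ ℓ₂ : ℝ → ℝ,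
      IsClassK ℓ₁ ∧ IsClassK ℓ₂ ∧
      ContDiffOn ℝ 1 ℓ₁ (Set.Ioi 0) ∧ ContDiffOn ℝ 1 ℓ₂ (Set.Ioi 0) ∧
      (∀ s : ℝ, 0 < s → G s < ℓ₁ s ∧ ℓ₁ s < ℓ₂ s ∧ ℓ₂ s < H s) ∧
      ∃ R₁ R₂ : ℝ,
        Tendsto ℓ₁ atTop (nhds R₁) ∧ Tendsto ℓ₂ atTop (nhds R₂) ∧
        r < R₁ ∧ R₁ ≤ R₂ ∧
        (∀ s : ℝ, 0 ≤ s → ℓ₁ s < R₁ ∧ ℓ₂ s < R₂) := by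
  obtain ⟨hGc, -, -⟩ := hGK
  obtain ⟨hHc, hHm, hH0⟩ := hHK
  obtain ⟨δ, hδ, hδ_pos, hmargin⟩ := exists_monotone_margin (c := (r + R) / 2)
    (hGc.mono Ioi_subset_Ici_self) (hHc.mono Ioi_subset_Ici_self) hGH
    (hGlim.eventually (eventually_le_nhds (by linarith)))
    (hHlim.eventually (eventually_ge_nhds (by linarith)))
  obtain ⟨w, hw, hwδ⟩ := exists_isWindowWidth_lt hδ hδ_pos
  have hK₁ := hw.isClassK_trailingAverage hHc hHm hH0
  have hK₂ := hw.div_two.isClassK_trailingAverage hHc hHm hH0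
  have hlim₁ := hw.tendsto_trailingAverage hHc hHm hHlim
  have hlim₂ := hw.div_two.tendsto_trailingAverage hHc hHm hHlim
  refine ⟨_, _, hK₁, hK₂, contDiffOn_trailingAverage (hHc.mono Ioi_subset_Ici_self) hw,
    contDiffOn_trailingAverage (hHc.mono Ioi_subset_Ici_self) hw.div_two,
    fun s hs => ⟨?_, ?_, ?_⟩, R, R, hlim₁, hlim₂, hrR, le_rfl,
    fun s hs => ⟨hK₁.2.1.lt_of_tendsto_atTop hlim₁ hs, hK₂.2.1.lt_of_tendsto_atTop hlim₂ hs⟩⟩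
  · exact (hmargin s (w s) (hw.pos s hs).le (hwδ s hs)).trans_lt
      (trailingAverage_mem_Ioo hHc hHm (hw.sub_pos hs).le (hw.pos s hs)).1
  · exact trailingAverage_lt_trailingAverage hHc hHm (hw.sub_pos hs).le (hw.div_two.pos s hs)
      (half_lt_self (hw.pos s hs))
  · exact (trailingAverage_mem_Ioo (s := s) hHc hHm (hw.div_two.sub_pos hs).le
      (hw.div_two.pos s hs)).2

/-- The construction (4.12): if `G, H : ℝ≥0 → ℝ≥0` are continuous, strictly increasing,
bounded, vanish at `0`, satisfy `G < H` on `(0,∞)` and `lim H > r := lim G`, then there are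
bounded class-`K` functions `ℓ₁, ℓ₂`, `C¹` on `(0,∞)`, with `G < ℓ₁ < ℓ₂ < H` on `(0,∞)`
and `r < lim ℓ₁ ≤ lim ℓ₂`; in particular `ℓᵢ(s) < lim ℓᵢ` for all `s ≥ 0`. -/
theorem squeeze_classK_construction (G H : ℝ → ℝ)
    (hGK : IsClassK G) (hHK : IsClassK H)
    (hGnonneg : ∀ s : ℝ, 0 ≤ s → 0 ≤ G s) (hHnonneg : ∀ s : ℝ, 0 ≤ s → 0 ≤ H s)
    (hGH : ∀ s : ℝ, 0 < s → G s < H s)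
    (hGbdd : ∃ M : ℝ, ∀ s : ℝ, 0 ≤ s → G s ≤ M)
    (hHbdd : ∃ M : ℝ, ∀ s : ℝ, 0 ≤ s → H s ≤ M)
    (r R : ℝ)
    (hGlim : Tendsto G atTop (nhds r))
    (hHlim : Tendsto H atTop (nhds R))
    (hrR : r < R) :
    ∃ ℓ₁ ℓ₂ : ℝ → ℝ,
      IsClassK ℓ₁ ∧ IsClassK ℓ₂ ∧
      ContDiffOn ℝ 1 ℓ₁ (Set.Ioi 0) ∧ ContDiffOn ℝ 1 ℓ₂ (Set.Ioi 0) ∧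
      (∀ s : ℝ, 0 < s → G s < ℓ₁ s ∧ ℓ₁ s < ℓ₂ s ∧ ℓ₂ s < H s) ∧
      ∃ R₁ R₂ : ℝ,
        Tendsto ℓ₁ atTop (nhds R₁) ∧ Tendsto ℓ₂ atTop (nhds R₂) ∧
        r < R₁ ∧ R₁ ≤ R₂ ∧
        (∀ s : ℝ, 0 ≤ s → ℓ₁ s < R₁ ∧ ℓ₂ s < R₂) :=
  squeeze_classK_construction_general G H hGK hHK hGH r R hGlim hHlim hrR
end
end

section
/- Let a₁, a₂, b₁, b₂ ∈ K∞, γ₁, Γ₂ ∈ K, and let V : ℝⁿ → ℝ≥0, W : ℝᵐ → ℝ≥0 satisfy a₁(|x|) ≤ V(x) ≤ a₂(|x|) for all x ∈ ℝⁿ and b₁(|y|) ≤ W(y) ≤ b₂(|y|) for all y ∈ ℝᵐ. Let ℓ ∈ K satisfy (b₂∘Γ₂∘a₁⁻¹)(s) < ℓ(s) < (b₁∘γ₁∘a₂⁻¹)(s) for all s > 0. Then for every (x₀, y₀) ∈ ℝⁿ × ℝᵐ with (x₀, y₀) ≠ (0,0): (a) W(y₀) < ℓ(V(x₀)) implies |y₀|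 < γ₁(|x₀|); (b) W(y₀) > ℓ(V(x₀)) implies |y₀| > Γ₂(|x₀|); (c) W(y₀) = ℓ(V(x₀)) implies both |y₀| < γ₁(|x₀|) and |y₀| > Γ₂(|x₀|). -/
open Filter Set

noncomputable section

/-- A function of class `K∞`: class `K` and tending to `∞`. -/
def IsClassKInf (φ : ℝ → ℝ) : Prop :=
  IsClassK φ ∧ Tendsto φ atTop atTop

/-- Implications (4.15a,b,c): if `a₁(|x|) ≤ V(x) ≤ a₂(|x|)`, `b₁(|y|) ≤ W(y) ≤ b₂(|y|)` and
`ℓ ∈ K` satisfies `(b₂∘Γ₂∘a₁⁻¹)(s) < ℓ(s) < (b₁∘γ₁∘a₂⁻¹)(s)` for `s > 0`, then for nonzero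
`(x₀,y₀)`: `W(y₀) < ℓ(V(x₀))` implies `|y₀| < γ₁(|x₀|)`; `W(y₀) > ℓ(V(x₀))` implies
`|y₀| > Γ₂(|x₀|)`; and `W(y₀) = ℓ(V(x₀))` implies both. -/
theorem implications_415 {n m : ℕ}
    (a₁ a₂ b₁ b₂ : ℝ → ℝ)
    (ha₁ : IsClassKInf a₁) (ha₂ : IsClassKInf a₂)
    (hb₁ : IsClassKInf b₁) (hb₂ : IsClassKInf b₂)
    (γ₁ Γ₂ : ℝ → ℝ) (hγ₁ : IsClassK γ₁) (hΓ₂ : IsClassK Γ₂)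
    (V : EuclideanSpace ℝ (Fin n) → ℝ) (W : EuclideanSpace ℝ (Fin m) → ℝ)
    (hV : ∀ x : EuclideanSpace ℝ (Fin n), a₁ ‖x‖ ≤ V x ∧ V x ≤ a₂ ‖x‖)
    (hW : ∀ y : EuclideanSpace ℝ (Fin m), b₁ ‖y‖ ≤ W y ∧ W y ≤ b₂ ‖y‖)
    -- inverses of a₁, a₂ on [0,∞)
    (a₁inv a₂inv : ℝ → ℝ)
    (ha₁inv : ∀ s : ℝ, 0 ≤ s → a₁ (a₁inv s) = s ∧ a₁inv (a₁ s) = s ∧ 0 ≤ a₁inv s)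
    (ha₂inv : ∀ s : ℝ, 0 ≤ s → a₂ (a₂inv s) = s ∧ a₂inv (a₂ s) = s ∧ 0 ≤ a₂inv s)
    (ℓ : ℝ → ℝ) (hℓ : IsClassK ℓ)
    (hℓsq : ∀ s : ℝ, 0 < s → b₂ (Γ₂ (a₁inv s)) < ℓ s ∧ ℓ s < b₁ (γ₁ (a₂inv s))) :
    ∀ (x₀ : EuclideanSpace ℝ (Fin n)) (y₀ : EuclideanSpace ℝ (Fin m)),
      (x₀, y₀) ≠ 0 →
      (W y₀ < ℓ (V x₀) → ‖y₀‖ < γ₁ ‖x₀‖) ∧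
      (W y₀ > ℓ (V x₀) → ‖y₀‖ > Γ₂ ‖x₀‖) ∧
      (W y₀ = ℓ (V x₀) → ‖y₀‖ < γ₁ ‖x₀‖ ∧ ‖y₀‖ > Γ₂ ‖x₀‖) := by
  obtain ⟨⟨a₁c, a₁m, a₁0⟩, -⟩ := ha₁
  obtain ⟨⟨a₂c, a₂m, a₂0⟩, -⟩ := ha₂
  obtain ⟨⟨b₁c, b₁m, b₁0⟩, -⟩ := hb₁
  obtain ⟨⟨b₂c, b₂m, b₂0⟩, -⟩ := hb₂
  obtain ⟨γ₁c, γ₁m, γ₁0⟩ := hγ₁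
  obtain ⟨Γ₂c, Γ₂m, Γ₂0⟩ := hΓ₂
  obtain ⟨ℓc, ℓm, ℓ0⟩ := hℓ
  intro x₀ y₀ hne
  have hx0 : (0:ℝ) ≤ ‖x₀‖ := norm_nonneg _
  have hy0 : (0:ℝ) ≤ ‖y₀‖ := norm_nonneg _
  -- nonnegativity facts
  have ha₁nn : 0 ≤ a₁ ‖x₀‖ := by
    have := a₁m.monotoneOn (Set.self_mem_Ici) (Set.mem_Ici.2 hx0) hx0
    linarith [a₁0]
  have hVnn : 0 ≤ V x₀ := le_trans ha₁nn (hV x₀).1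
  have hb₁nn : 0 ≤ b₁ ‖y₀‖ := by
    have := b₁m.monotoneOn (Set.self_mem_Ici) (Set.mem_Ici.2 hy0) hy0
    linarith [b₁0]
  have hWnn : 0 ≤ W y₀ := le_trans hb₁nn (hW y₀).1
  have hγnn : ∀ t : ℝ, 0 ≤ t → 0 ≤ γ₁ t := fun t ht => by
    have := γ₁m.monotoneOn (Set.self_mem_Ici) (Set.mem_Ici.2 ht) ht
    linarith [γ₁0]
  have hΓnn : ∀ t : ℝ, 0 ≤ t → 0 ≤ Γ₂ t := fun t ht => by
    have := Γ₂m.monotoneOn (Set.self_mem_Ici) (Set.mem_Ici.2 ht) ht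
    linarith [Γ₂0]
  -- comparison helpers
  have key_lt : ∀ (φ : ℝ → ℝ), StrictMonoOn φ (Set.Ici 0) → ∀ s t : ℝ, 0 ≤ s → 0 ≤ t →
      φ s < φ t → s < t := fun φ hm s t hs ht h =>
    (hm.lt_iff_lt (Set.mem_Ici.2 hs) (Set.mem_Ici.2 ht)).1 h
  have key_le : ∀ (φ : ℝ → ℝ), StrictMonoOn φ (Set.Ici 0) → ∀ s t : ℝ, 0 ≤ s → 0 ≤ t →
      φ s ≤ φ t → s ≤ t := fun φ hm s t hs ht h =>
    (hm.le_iff_le (Set.mem_Ici.2 hs) (Set.mem_Ici.2 ht)).1 h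
  -- main claim A: from b₁‖y₀‖ < b₁(γ₁(a₂inv (V x₀))) with V x₀ > 0 conclude ‖y₀‖ < γ₁‖x₀‖
  have claimA : ∀ _ : 0 < V x₀, b₁ ‖y₀‖ < b₁ (γ₁ (a₂inv (V x₀))) → ‖y₀‖ < γ₁ ‖x₀‖ := by
    intro hVpos hlt
    have hinvnn : 0 ≤ a₂inv (V x₀) := (ha₂inv _ hVnn).2.2
    have h1 : ‖y₀‖ < γ₁ (a₂inv (V x₀)) :=
      key_lt b₁ b₁m _ _ hy0 (hγnn _ hinvnn) hlt
    have h2 : a₂inv (V x₀) ≤ ‖x₀‖ := by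
      apply key_le a₂ a₂m _ _ hinvnn hx0
      rw [(ha₂inv _ hVnn).1]
      exact (hV x₀).2
    calc ‖y₀‖ < γ₁ (a₂inv (V x₀)) := h1
      _ ≤ γ₁ ‖x₀‖ := γ₁m.monotoneOn (Set.mem_Ici.2 hinvnn) (Set.mem_Ici.2 hx0) h2
  have claimB : ∀ _ : 0 < V x₀, b₂ (Γ₂ (a₁inv (V x₀))) < b₂ ‖y₀‖ → Γ₂ ‖x₀‖ < ‖y₀‖ := by
    intro hVpos hlt
    have hinvnn : 0 ≤ a₁inv (V x₀) := (ha₁inv _ hVnn).2.2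
    have h1 : Γ₂ (a₁inv (V x₀)) < ‖y₀‖ :=
      key_lt b₂ b₂m _ _ (hΓnn _ hinvnn) hy0 hlt
    have h2 : ‖x₀‖ ≤ a₁inv (V x₀) := by
      apply key_le a₁ a₁m _ _ hx0 hinvnn
      rw [(ha₁inv _ hVnn).1]
      exact (hV x₀).1
    calc Γ₂ ‖x₀‖ ≤ Γ₂ (a₁inv (V x₀)) :=
        Γ₂m.monotoneOn (Set.mem_Ici.2 hx0) (Set.mem_Ici.2 hinvnn) h2
      _ < ‖y₀‖ := h1
  refine ⟨?_, ?_, ?_⟩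
  · -- (a)
    intro hlt
    have hVpos : 0 < V x₀ := by
      rcases lt_or_eq_of_le hVnn with h | h
      · exact h
      · rw [← h, ℓ0] at hlt; linarith
    have hsq := (hℓsq _ hVpos).2
    exact claimA hVpos (lt_of_le_of_lt (hW y₀).1 (lt_trans hlt hsq))
  · -- (b)
    intro hgt
    rcases lt_or_eq_of_le hVnn with hVpos | hV0
    · have hsq := (hℓsq _ hVpos).1
      exact claimB hVpos (lt_of_lt_of_le (lt_trans hsq hgt) (hW y₀).2)
    · -- V x₀ = 0 : then x₀ = 0, and y₀ ≠ 0
      have hx : ‖x₀‖ ≤ 0 := by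
        apply key_le a₁ a₁m _ _ hx0 le_rfl
        rw [a₁0, hV0]; exact (hV x₀).1
      have hxe : ‖x₀‖ = 0 := le_antisymm hx hx0
      have hWpos : 0 < W y₀ := by rw [← hV0, ℓ0] at hgt; exact hgt
      have hy : 0 < ‖y₀‖ := by
        rcases lt_or_eq_of_le hy0 with h | h
        · exact h
        · exfalso
          have := (hW y₀).2
          rw [← h, b₂0] at this; linarith
      have : Γ₂ ‖x₀‖ = 0 := by rw [hxe, Γ₂0]
      rw [gt_iff_lt, this]; exact hy
  · -- (c)
    intro heq
    have hVpos : 0 < V x₀ := by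
      rcases lt_or_eq_of_le hVnn with h | h
      · exact h
      · exfalso
        have hW0 : W y₀ = 0 := by rw [heq, ← h, ℓ0]
        have hy : ‖y₀‖ ≤ 0 := by
          apply key_le b₁ b₁m _ _ hy0 le_rfl
          rw [b₁0, ← hW0]; exact (hW y₀).1
        have hx : ‖x₀‖ ≤ 0 := by
          apply key_le a₁ a₁m _ _ hx0 le_rfl
          rw [a₁0, h]; exact (hV x₀).1
        apply hne
        have hx0' : x₀ = 0 := norm_eq_zero.1 (le_antisymm hx hx0)
        have hy0' : y₀ = 0 := norm_eq_zero.1 (le_antisymm hy hy0)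
        simp [hx0', hy0', Prod.ext_iff]
    obtain ⟨hsq1, hsq2⟩ := hℓsq _ hVpos
    constructor
    · exact claimA hVpos (lt_of_le_of_lt (heq ▸ (hW y₀).1) hsq2)
    · exact claimB hVpos (lt_of_lt_of_le hsq1 (heq ▸ (hW y₀).2))
end
end

section
/- Under the hypotheses of Proposition 1 (existence of D₁, D₂, 0 ≤ L₁ < L₂ ≤ ∞, continuous Φ with (2.2), β ∈ K with (2.3)), set β̄ := 2β. Then for every σ > 0 there exist a lower semicontinuous map T : D₂ \ D₁ → (0, ∞) with T(x) ≤ σ for all x ∈ D₂ \ D₁, and a map q̄ : D₂ \ D₁ → (0, ∞) with liminf_{x→a} q̄(x) > 0 for every a ∈ D₂ \ D₁, such that for every x ∈ D₂ \ D₁ there exists a control u_x : [0, T(x)] → ℝ^ℓ with Φ(π(T(x), 0, x, u_x)) ≤ Φ(x) − q̄(x) and Φ(π(t, 0, x, u_x)) ≤ β̄(Φ(x)) for all t ∈ [0, T(x)]. -/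
/-
At a point `a` of `D₂ \ D₁`, hypothesis (2.3) provides a control steering `a` along a
trajectory `π₀` on which `Φ` decreases and stays below `β (Φ a)`. That control is only an arbitrary
function, but it can be replaced by a continuous one which is `L¹`-close along `π₀` (a bounded
measurable selection from a dense sequence of control values, then a continuous approximation).
By Grönwall's inequality, every initial point `y` near `a` is then steered by the continuous control
along a trajectory uniformly close to `π₀`, so that `Φ` still decreases by a fixed amount `q` and
stays below `2 β (Φ y)`. Finally `D₂ \ D₁` is paracompact: along a locally finite refinement of
the resulting cover, `T x` is a finite maximum of local times, hence lower semicontinuous, and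
`q̄ x` a finite minimum of local decreases, hence locally bounded below.
-/

open MeasureTheory Filter Set

noncomputable section

open Topology Function TopologicalSpace
open scoped NNReal

theorem LipschitzWith.uncurry_left {α β γ : Type*} [PseudoEMetricSpace α] [PseudoEMetricSpace β]
    [PseudoEMetricSpace γ] {f : α → β → γ} {K : ℝ≥0} (a : α) (h : LipschitzWith K (uncurry f)) :
    LipschitzWith K (f a) :=
  mul_one K ▸ h.comp (LipschitzWith.prodMk_left a)

theorem LipschitzWith.uncurry_right {α β γ : Type*} [PseudoEMetricSpace α] [PseudoEMetricSpace β]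
    [PseudoEMetricSpace γ] {f : α → β → γ} {K : ℝ≥0} (b : β) (h : LipschitzWith K (uncurry f)) :
    LipschitzWith K fun a => f a b :=
  mul_one K ▸ h.comp (LipschitzWith.prodMk_right b)

theorem IsCompact.exists_forall_dist_lt_of_continuous {X Y : Type*} [PseudoMetricSpace X]
    [PseudoMetricSpace Y] {s : Set X} (hs : IsCompact s) {f : X → Y} (hf : Continuous f)
    {ε : ℝ} (hε : 0 < ε) : ∃ δ > 0, ∀ x ∈ s, ∀ y, dist x y < δ → dist (f x) (f y) < ε := by
  obtain ⟨δ, hδ, h⟩ := Metric.mem_uniformity_dist.1 <|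
    hs.uniformContinuousAt_of_continuousAt f (fun _ _ => hf.continuousAt)
      (Metric.dist_mem_uniformity hε)
  exact ⟨δ, hδ, fun x hx y hxy => h hxy hx⟩

section Covering

variable {X : Type*} [TopologicalSpace X] {P : X → ℝ → ℝ → Prop} {I : Set ℝ}

theorem exists_lowerSemicontinuous_of_forall_eventually [ParacompactSpace X]
    (hP : ∀ x τ q q', q' ≤ q → P x τ q → P x τ q')
    (hloc : ∀ a, ∃ τ ∈ I, ∃ q > 0, ∀ᶠ x in 𝓝 a, P x τ q) :
    ∃ T qbar : X → ℝ, LowerSemicontinuous T ∧ (∀ x, T x ∈ I) ∧ (∀ x, 0 < qbar x) ∧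
      (∀ a, ∃ ε > 0, ∀ᶠ x in 𝓝 a, ε ≤ qbar x) ∧ ∀ x, P x (T x) (qbar x) := by
  choose τ hτ q hq hev using hloc
  choose W hWP hWopen hWmem using fun a => eventually_nhds_iff.1 (hev a)
  obtain ⟨V, hVopen, hVcover, hVfin, hVW⟩ := precise_refinement W hWopen
    (iUnion_eq_univ_iff.2 fun a => ⟨a, hWmem a⟩)
  have hne : ∀ x, ((hVfin.point_finite x).toFinset).Nonempty := fun x =>
    let ⟨a, ha⟩ := iUnion_eq_univ_iff.1 hVcover x
    ⟨a, (hVfin.point_finite x).mem_toFinset.2 ha⟩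
  set T : X → ℝ := fun x => ((hVfin.point_finite x).toFinset).sup' (hne x) τ
  set qbar : X → ℝ := fun x => ((hVfin.point_finite x).toFinset).inf' (hne x) q
  have hT : ∀ x, ∃ a, x ∈ V a ∧ T x = τ a := fun x => by
    obtain ⟨a, ha, hTa⟩ := Finset.exists_mem_eq_sup' (hne x) τ
    exact ⟨a, (hVfin.point_finite x).mem_toFinset.1 ha, hTa⟩
  have hqbar : ∀ x, ∃ a, x ∈ V a ∧ qbar x = q a := fun x => by
    obtain ⟨a, ha, hqa⟩ := Finset.exists_mem_eq_inf' (hne x) q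
    exact ⟨a, (hVfin.point_finite x).mem_toFinset.1 ha, hqa⟩
  have hτ_le : ∀ x a, x ∈ V a → τ a ≤ T x := fun x a ha =>
    Finset.le_sup' τ ((hVfin.point_finite x).mem_toFinset.2 ha)
  have hqbar_le : ∀ x a, x ∈ V a → qbar x ≤ q a := fun x a ha =>
    Finset.inf'_le q ((hVfin.point_finite x).mem_toFinset.2 ha)
  refine ⟨T, qbar, fun x y hy => ?_, fun x => ?_, fun x => ?_, fun p => ?_, fun x => ?_⟩
  · obtain ⟨a, hxa, hTa⟩ := hT x
    filter_upwards [(hVopen a).mem_nhds hxa] with x' hx'a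
    exact hy.trans_le (hTa ▸ hτ_le x' a hx'a)
  · obtain ⟨a, -, hTa⟩ := hT x
    exact hTa ▸ hτ a
  · obtain ⟨a, -, hqa⟩ := hqbar x
    exact hqa ▸ hq a
  · obtain ⟨N, hN, hNfin⟩ := hVfin p
    obtain ⟨a₀, hpa₀, -⟩ := hqbar p
    have hNne : hNfin.toFinset.Nonempty :=
      ⟨a₀, hNfin.mem_toFinset.2 ⟨p, hpa₀, mem_of_mem_nhds hN⟩⟩
    refine ⟨hNfin.toFinset.inf' hNne q, (Finset.lt_inf'_iff hNne).2 fun a _ => hq a, ?_⟩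
    filter_upwards [hN] with x hxN
    obtain ⟨a, hxa, hqa⟩ := hqbar x
    exact hqa ▸ Finset.inf'_le q (hNfin.mem_toFinset.2 ⟨x, hxa, hxN⟩)
  · obtain ⟨a, hxa, hTa⟩ := hT x
    rw [hTa]
    exact hP x _ _ _ (hqbar_le x a hxa) (hWP a x (hVW a hxa))

theorem exists_lowerSemicontinuousOn_of_forall_eventually {s : Set X} [ParacompactSpace s]
    (hP : ∀ x τ q q', q' ≤ q → P x τ q → P x τ q')
    (hloc : ∀ a ∈ s, ∃ τ ∈ I, ∃ q > 0, ∀ᶠ x in 𝓝[s] a, P x τ q) :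
    ∃ T qbar : X → ℝ, LowerSemicontinuousOn T s ∧ (∀ x ∈ s, T x ∈ I) ∧ (∀ x ∈ s, 0 < qbar x) ∧
      (∀ a ∈ s, ∃ ε > 0, ∀ᶠ x in 𝓝[s] a, ε ≤ qbar x) ∧ ∀ x ∈ s, P x (T x) (qbar x) := by
  obtain ⟨T, qbar, hTlsc, hTI, hqbar, hqbar_loc, hTq⟩ :=
    exists_lowerSemicontinuous_of_forall_eventually (P := fun (x : s) => P x) (I := I)
      (fun x => hP x) fun a => by
        simpa only [nhdsWithin_eq_map_subtype_coe a.2, eventually_map] using hloc a a.2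
  have hext : ∀ f : s → ℝ, ∀ x : s, extend Subtype.val f 0 x = f x :=
    fun f => Subtype.val_injective.extend_apply f 0
  refine ⟨extend Subtype.val T 0, extend Subtype.val qbar 0, ?_, fun x hx => ?_, fun x hx => ?_,
    fun a ha => ?_, fun x hx => ?_⟩
  · rw [← lowerSemicontinuous_restrict_iff]
    convert hTlsc using 1
    exact funext (hext T)
  · simpa only [← hext] using hTI ⟨x, hx⟩
  · simpa only [← hext] using hqbar ⟨x, hx⟩
  · obtain ⟨ε, hε, hev⟩ := hqbar_loc ⟨a, ha⟩
    refine ⟨ε, hε, ?_⟩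
    rw [nhdsWithin_eq_map_subtype_coe ha, eventually_map]
    simpa only [hext] using hev
  · simpa only [← hext] using hTq ⟨x, hx⟩

end Covering

section Selection

variable {α : Type*} [MeasurableSpace α] {μ : Measure α}

theorem exists_measurable_nat_of_measurableSet {P : ℕ → α → Prop}
    (hP : ∀ j, MeasurableSet {t | P j t}) :
    ∃ m : α → ℕ, Measurable m ∧ ∀ t, (∃ j, P j t) → P (m t) t := by
  classical
  have htot : ∀ t, ∃ j, P j t ∨ ∀ i, ¬ P i t := fun t =>
    (em (∃ j, P j t)).elim (fun ⟨j, hj⟩ => ⟨j, .inl hj⟩) fun h => ⟨0, .inr (not_exists.1 h)⟩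
  refine ⟨fun t => Nat.find (htot t), measurable_find htot fun j => ?_, fun t ⟨j, hj⟩ => ?_⟩
  · simp only [ofPred_or, ofPred_forall]
    exact (hP j).union (MeasurableSet.iInter fun i => (hP i).compl)
  · exact (Nat.find_spec (htot t)).resolve_right fun h => h j hj

theorem tendsto_setIntegral_setOf_lt_atTop_zero {E : Type*} [NormedAddCommGroup E] [NormedSpace ℝ E]
    {m : α → ℕ} (hm : Measurable m) {h : α → E} (hh : Integrable h μ) :
    Tendsto (fun N : ℕ => ∫ t in {t | N < m t}, h t ∂μ) atTop (𝓝 0) := by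
  have hempty : ⋂ N : ℕ, {t | N < m t} = ∅ :=
    eq_empty_of_forall_notMem fun t ht => lt_irrefl (m t) (mem_iInter.1 ht (m t))
  simpa only [hempty, Measure.restrict_empty, integral_zero_measure] using
    tendsto_setIntegral_of_antitone (fun N => measurableSet_lt measurable_const hm)
      (fun N N' hNN' t (ht : N' < m t) => (Nat.cast_le.2 hNN').trans_lt ht) ⟨0, hh.integrableOn⟩

variable {U E : Type*} [NormedAddCommGroup U] [MeasurableSpace U]
  [NormedAddCommGroup E] [MeasurableSpace E] [BorelSpace E] [SecondCountableTopology E]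

theorem exists_bounded_measurable_integral_norm_sub_le [SeparableSpace U] [IsFiniteMeasure μ]
    {G : α → U → E}
    (hGm : Measurable (uncurry G)) (hGc : ∀ t, Continuous (G t))
    (hGi : ∀ u, Integrable (G · u) μ) {g : α → E} (hg : Integrable g μ)
    (hgG : ∀ᵐ t ∂μ, g t ∈ range (G t)) {ε : ℝ} (hε : 0 < ε) :
    ∃ w : α → U, Measurable w ∧ (∃ C, ∀ t, ‖w t‖ ≤ C) ∧
      Integrable (fun t => G t (w t) - g t) μ ∧ ∫ t, ‖G t (w t) - g t‖ ∂μ ≤ ε := by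
  wlog hgm : Measurable g generalizing g
  · have hae : g =ᵐ[μ] hg.1.mk g := hg.1.ae_eq_mk
    obtain ⟨w, hw, hwC, hint, hle⟩ := this (hg.congr hae)
      (by filter_upwards [hgG, hae] with t ht h; rwa [← h]) hg.1.measurable_mk
    have hae' : (fun t => G t (w t) - hg.1.mk g t) =ᵐ[μ] fun t => G t (w t) - g t := by
      filter_upwards [hae] with t ht; rw [ht]
    exact ⟨w, hw, hwC, hint.congr hae', integral_congr_ae (hae'.fun_comp norm) ▸ hle⟩
  obtain ⟨e, he⟩ := exists_dense_seq U
  set ε₁ := ε / (2 * (μ.real univ + 1))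
  have hε₁ : 0 < ε₁ := by positivity
  have hGe : ∀ j, Measurable fun t => G t (e j) := fun j =>
    hGm.comp (measurable_id.prodMk measurable_const)
  obtain ⟨m, hm, hmP⟩ := exists_measurable_nat_of_measurableSet
    (P := fun j t => ‖G t (e j) - g t‖ < ε₁)
    fun j => measurableSet_lt ((hGe j).sub hgm).norm measurable_const
  have hgood : ∀ᵐ t ∂μ, ‖G t (e (m t)) - g t‖ < ε₁ := by
    filter_upwards [hgG] with t ⟨u, hu⟩
    refine hmP t (he.exists_mem_open (isOpen_lt (hGc t |>.sub continuous_const).norm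
      continuous_const) ⟨u, ?_⟩)
    simpa [hu] using hε₁
  set h : α → ℝ := fun t => ‖G t (e 0) - g t‖
  have hh : Integrable h μ := ((hGi (e 0)).sub hg).norm
  obtain ⟨N, hN⟩ := ((tendsto_setIntegral_setOf_lt_atTop_zero hm hh).eventually
    (eventually_le_nhds (half_pos hε))).exists
  -- `m t` indexes a good control value; truncating it at `N` makes the selection bounded, at an
  -- `L¹` cost that vanishes as `N → ∞`
  set w : α → U := fun t => e (if m t ≤ N then m t else 0)
  have hw : Measurable w := measurable_from_nat.comp
    (Measurable.ite (measurableSet_le hm measurable_const) hm measurable_const)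
  have hwC : ∀ t, ‖w t‖ ≤ (Finset.range (N + 1)).sup' Finset.nonempty_range_add_one (‖e ·‖) := by
    intro t
    refine Finset.le_sup' (‖e ·‖) (Finset.mem_range_succ_iff.2 ?_)
    split_ifs with hmN <;> omega
  have hbound : ∀ᵐ t ∂μ, ‖G t (w t) - g t‖ ≤ ε₁ + {t | N < m t}.indicator h t := by
    filter_upwards [hgood] with t ht
    by_cases hmN : m t ≤ N
    · have : w t = e (m t) := by simp [w, hmN]
      rw [this, indicator_of_notMem (by simpa using hmN)]
      linarith
    · have : w t = e 0 := by simp [w, hmN]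
      rw [this, indicator_of_mem (by simpa using hmN)]
      linarith [norm_nonneg (G t (e 0) - g t)]
  have hmeas : Measurable fun t => G t (w t) - g t := (hGm.comp (measurable_id.prodMk hw)).sub hgm
  have hmN : MeasurableSet {t | N < m t} := measurableSet_lt measurable_const hm
  have hdom : Integrable (fun t => ε₁ + {t | N < m t}.indicator h t) μ :=
    (integrable_const ε₁).add (hh.indicator hmN)
  refine ⟨w, hw, ⟨_, hwC⟩, hdom.mono' hmeas.aestronglyMeasurable hbound, ?_⟩
  calc ∫ t, ‖G t (w t) - g t‖ ∂μ ≤ ∫ t, (ε₁ + {t | N < m t}.indicator h t) ∂μ :=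
        integral_mono_ae (hdom.mono' hmeas.aestronglyMeasurable hbound).norm hdom hbound
    _ = ε₁ * μ.real univ + ∫ t in {t | N < m t}, h t ∂μ := by
        rw [integral_add (integrable_const ε₁) (hh.indicator hmN), integral_const,
          integral_indicator hmN, smul_eq_mul, mul_comm]
    _ ≤ ε / 2 + ε / 2 := by
        gcongr
        rw [div_mul_eq_mul_div, div_le_div_iff₀ (by positivity) two_pos]
        nlinarith [measureReal_nonneg (μ := μ) (s := univ)]
    _ = ε := add_halves ε

theorem exists_continuous_integral_norm_sub_le [NormedSpace ℝ U] [BorelSpace U]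
    [SecondCountableTopology U] {μ : Measure ℝ} [IsFiniteMeasure μ] {G : ℝ → U → E} {K : ℝ≥0}
    (hG : Continuous (uncurry G)) (hGK : ∀ t, LipschitzWith K (G t))
    (hGi : ∀ u, Integrable (G · u) μ) {g : ℝ → E} (hg : Integrable g μ)
    (hgG : ∀ᵐ t ∂μ, g t ∈ range (G t)) {ε : ℝ} (hε : 0 < ε) :
    ∃ v : ℝ → U, Continuous v ∧
      Integrable (fun t => G t (v t) - g t) μ ∧ ∫ t, ‖G t (v t) - g t‖ ∂μ ≤ ε := by
  obtain ⟨w, hw, ⟨C, hC⟩, hwg, hwg_le⟩ := exists_bounded_measurable_integral_norm_sub_le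
    hG.measurable (fun t => hG.comp (continuous_const.prodMk continuous_id)) hGi hg hgG
    (half_pos hε)
  have hwi : Integrable w μ := .of_bound hw.aestronglyMeasurable C (ae_of_all _ hC)
  obtain ⟨v, -, hwv_le, hv, hvi⟩ :=
    hwi.exists_hasCompactSupport_integral_sub_le (ε := ε / (2 * (K + 1))) (by positivity)
  have hLip : ∀ t, ‖G t (v t) - G t (w t)‖ ≤ K * ‖w t - v t‖ := fun t => by
    simpa only [dist_eq_norm, norm_sub_rev (w t)] using (hGK t).dist_le_mul (v t) (w t)
  have hwv : Integrable (fun t => K * ‖w t - v t‖) μ := (hwi.sub hvi).norm.const_mul K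
  have hvw : Integrable (fun t => G t (v t) - G t (w t)) μ :=
    hwv.mono'
      ((hG.comp (continuous_id.prodMk hv)).aestronglyMeasurable.sub
        (hG.measurable.comp (measurable_id.prodMk hw)).aestronglyMeasurable)
      (ae_of_all _ hLip)
  have hsplit : ∀ t, G t (v t) - g t = (G t (v t) - G t (w t)) + (G t (w t) - g t) :=
    fun t => (sub_add_sub_cancel _ _ _).symm
  refine ⟨v, hv, (hvw.add hwg).congr (ae_of_all _ fun t => (hsplit t).symm), ?_⟩
  calc ∫ t, ‖G t (v t) - g t‖ ∂μ
      ≤ ∫ t, (K * ‖w t - v t‖ + ‖G t (w t) - g t‖) ∂μ := by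
        refine integral_mono_of_nonneg (ae_of_all _ fun t => norm_nonneg _)
          (hwv.add hwg.norm) (ae_of_all _ fun t => ?_)
        simp only [hsplit t]
        exact (norm_add_le _ _).trans (add_le_add_left (hLip t) _)
    _ = K * ∫ t, ‖w t - v t‖ ∂μ + ∫ t, ‖G t (w t) - g t‖ ∂μ := by
        rw [integral_add hwv hwg.norm, integral_const_mul]
    _ ≤ K * (ε / (2 * (K + 1))) + ε / 2 := by gcongr
    _ ≤ ε / 2 + ε / 2 := by
        gcongr
        rw [mul_div_assoc', div_le_div_iff₀ (by positivity) two_pos]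
        nlinarith [K.2]
    _ = ε := add_halves ε

end Selection

theorem le_mul_exp_of_le_add_mul_integral {f : ℝ → ℝ} {τ K c : ℝ} (hτ : 0 ≤ τ) (hK : 0 ≤ K)
    (hf : ContinuousOn f (Icc 0 τ)) (hf0 : ∀ t ∈ Icc 0 τ, 0 ≤ f t)
    (hle : ∀ t ∈ Icc 0 τ, f t ≤ c + K * ∫ r in (0:ℝ)..t, f r) :
    ∀ t ∈ Icc 0 τ, f t ≤ c * Real.exp (K * t) := by
  set f' : ℝ → ℝ := IccExtend hτ ((Icc 0 τ).domRestrict f)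
  have hf' : Continuous f' := continuous_IccExtend_iff.2 hf.domRestrict
  have hff' : ∀ t ∈ Icc 0 τ, f' t = f t := fun t ht => IccExtend_of_mem hτ _ ht
  set ψ : ℝ → ℝ := fun t => c + K * ∫ r in (0:ℝ)..t, f' r
  have hψ : ∀ t, HasDerivAt ψ (K * f' t) t := fun t =>
    ((hf'.integral_hasStrictDerivAt 0 t).hasDerivAt.const_mul K).const_add c
  have hfψ : ∀ t ∈ Icc 0 τ, f t ≤ ψ t := fun t ht => by
    have : ∫ r in (0:ℝ)..t, f' r = ∫ r in (0:ℝ)..t, f r := intervalIntegral.integral_congr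
      fun r hr => hff' r (by rw [uIcc_of_le ht.1] at hr; exact ⟨hr.1, hr.2.trans ht.2⟩)
    simpa only [ψ, this] using hle t ht
  have hψ0 : ∀ t ∈ Icc 0 τ, 0 ≤ ψ t := fun t ht => (hf0 t ht).trans (hfψ t ht)
  have hc : 0 ≤ c := by simpa [ψ] using hψ0 0 ⟨le_rfl, hτ⟩
  intro t ht
  have hgr := norm_le_gronwallBound_of_norm_deriv_right_le (δ := c) (ε := 0) (K := K)
    (fun t _ => (hψ t).continuousAt.continuousWithinAt) (fun t _ => (hψ t).hasDerivWithinAt)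
    (by simp [ψ, abs_of_nonneg hc]) (fun s hs => ?_) t ht
  · rw [Real.norm_of_nonneg (hψ0 t ht), gronwallBound_ε0, sub_zero] at hgr
    exact (hfψ t ht).trans hgr
  · have hs' : s ∈ Icc 0 τ := Ico_subset_Icc_self hs
    rw [hff' s hs', Real.norm_of_nonneg (mul_nonneg hK (hf0 s hs')),
      Real.norm_of_nonneg (hψ0 s hs'), add_zero]
    exact mul_le_mul_of_nonneg_left (hfψ s hs') hK

section Trajectories

variable {E : Type*} [NormedAddCommGroup E] [NormedSpace ℝ E]

theorem norm_sub_le_of_eq_add_integral {f : ℝ → E → E} {K : ℝ≥0} (hf : Continuous (uncurry f))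
    (hK : ∀ t, LipschitzWith K (f t)) {z π g : ℝ → E} {y a : E} {τ δ : ℝ} (hτ : 0 ≤ τ)
    (hz : ContinuousOn z (Icc 0 τ)) (hπ : ContinuousOn π (Icc 0 τ))
    (hg : IntervalIntegrable g volume 0 τ)
    (hzeq : ∀ t ∈ Icc 0 τ, z t = y + ∫ r in (0:ℝ)..t, f r (z r))
    (hπeq : ∀ t ∈ Icc 0 τ, π t = a + ∫ r in (0:ℝ)..t, g r)
    (hδ : ∫ r in (0:ℝ)..τ, ‖f r (π r) - g r‖ ≤ δ) :
    ∀ t ∈ Icc 0 τ, ‖z t - π t‖ ≤ (‖y - a‖ + δ) * Real.exp (K * t) := by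
  have hsub : ∀ t ∈ Icc 0 τ, uIcc 0 t ⊆ Icc 0 τ := fun t ht => by
    rw [uIcc_of_le ht.1]; exact Icc_subset_Icc_right ht.2
  have hfc : ∀ {w : ℝ → E}, ContinuousOn w (Icc 0 τ) →
      ContinuousOn (fun r => f r (w r)) (Icc 0 τ) := fun hw =>
    hf.comp_continuousOn (continuousOn_id.prodMk hw)
  have hfπg : IntervalIntegrable (fun r => ‖f r (π r) - g r‖) volume 0 τ :=
    ((hfc hπ).intervalIntegrable_of_Icc hτ |>.sub hg).norm
  refine le_mul_exp_of_le_add_mul_integral hτ K.2 (hz.sub hπ).norm (fun _ _ => norm_nonneg _)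
    fun t ht => ?_
  have hzi : IntervalIntegrable (fun r => f r (z r)) volume 0 t :=
    (hfc hz).mono (hsub t ht) |>.intervalIntegrable
  have hπi : IntervalIntegrable (fun r => f r (π r)) volume 0 t :=
    (hfc hπ).mono (hsub t ht) |>.intervalIntegrable
  have hgi : IntervalIntegrable g volume 0 t := hg.mono_set (by
    rw [uIcc_of_le hτ]; exact hsub t ht)
  have hsplit : z t - π t = (y - a) + (∫ r in (0:ℝ)..t, (f r (z r) - f r (π r))) +
      ∫ r in (0:ℝ)..t, (f r (π r) - g r) := by
    rw [intervalIntegral.integral_sub hzi hπi, intervalIntegral.integral_sub hπi hgi,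
      hzeq t ht, hπeq t ht]
    abel
  have hLip : ‖∫ r in (0:ℝ)..t, (f r (z r) - f r (π r))‖ ≤ K * ∫ r in (0:ℝ)..t, ‖z r - π r‖ := by
    rw [← intervalIntegral.integral_const_mul]
    refine (intervalIntegral.norm_integral_le_integral_norm ht.1).trans
      (intervalIntegral.integral_mono_on ht.1 (hzi.sub hπi).norm ?_ fun r _ => ?_)
    · exact (((hz.sub hπ).norm.mono (hsub t ht)).intervalIntegrable).const_mul _
    · simpa only [dist_eq_norm] using (hK r).dist_le_mul (z r) (π r)
  have herr : ‖∫ r in (0:ℝ)..t, (f r (π r) - g r)‖ ≤ δ :=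
    (intervalIntegral.norm_integral_le_integral_norm ht.1).trans <|
      (intervalIntegral.integral_mono_interval le_rfl ht.1 ht.2
        (ae_of_all _ fun _ => norm_nonneg _) hfπg).trans hδ
  calc ‖z t - π t‖ ≤ ‖y - a‖ + ‖∫ r in (0:ℝ)..t, (f r (z r) - f r (π r))‖ +
        ‖∫ r in (0:ℝ)..t, (f r (π r) - g r)‖ := hsplit ▸ norm_add₃_le
    _ ≤ ‖y - a‖ + δ + K * ∫ r in (0:ℝ)..t, ‖z r - π r‖ := by linarith

theorem exists_eq_add_integral_of_lipschitzWith [CompleteSpace E] {f : ℝ → E → E} {K : ℝ≥0}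
    (hf : Continuous (uncurry f)) (hK : ∀ t, LipschitzWith K (f t)) {τ : ℝ} (hτ : 0 ≤ τ)
    (hKτ : K * τ ≤ 1 / 2) (y : E) :
    ∃ z : ℝ → E, z 0 = y ∧ ContinuousOn z (Icc 0 τ) ∧
      ∀ t ∈ Icc 0 τ, z t = y + ∫ r in (0:ℝ)..t, f r (z r) := by
  obtain ⟨M, hM⟩ := (isCompact_Icc (a := 0) (b := τ)).exists_bound_of_continuousOn
    (hf.comp (continuous_id.prodMk continuous_const)).continuousOn (f := fun t => f t y)
  have hM0 : 0 ≤ M := (norm_nonneg _).trans (hM 0 ⟨le_rfl, hτ⟩)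
  -- on the ball of radius `R` the field is bounded by `M + K R`, and `(M + K R) τ ≤ R`
  set R : ℝ := 2 * M * τ + 1
  have hR : 0 ≤ R := by positivity
  have hpl : IsPicardLindelof f (tmin := 0) (tmax := τ) ⟨0, le_rfl, hτ⟩ y ⟨R, hR⟩ 0
      ⟨M + K * R, by positivity⟩ K := by
    refine ⟨fun t _ => (hK t).lipschitzOnWith, fun x _ =>
      (hf.comp (continuous_id.prodMk continuous_const)).continuousOn, fun t ht x hx => ?_, ?_⟩
    · calc ‖f t x‖ ≤ ‖f t y‖ + ‖f t x - f t y‖ := norm_le_insert' _ _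
        _ ≤ M + K * R := by
          gcongr
          · exact hM t ht
          · have hx' : dist x y ≤ R := hx
            simpa only [dist_eq_norm] using
              ((hK t).dist_le_mul x y).trans (mul_le_mul_of_nonneg_left hx' K.2)
    · simp only [NNReal.coe_zero, tsub_zero]
      rw [max_eq_left hτ]
      show (M + K * R) * τ ≤ R
      nlinarith
  obtain ⟨z, hz0, hz⟩ := hpl.exists_eq_forall_mem_Icc_hasDerivWithinAt₀
  have hzc : ContinuousOn z (Icc 0 τ) := fun t ht => (hz t ht).continuousWithinAt
  refine ⟨z, hz0, hzc, fun t ht => ?_⟩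
  have hsub : uIcc 0 t ⊆ Icc 0 τ := by rw [uIcc_of_le ht.1]; exact Icc_subset_Icc_right ht.2
  rw [← hz0]
  exact (ODE.picard_eq_of_hasDerivAt (u := univ) hf.continuousOn
    (fun r hr => (hz r (hsub hr)).mono hsub) (mapsTo_univ _ _)).symm

variable {U : Type*} [NormedAddCommGroup U] [NormedSpace ℝ U] [MeasurableSpace U] [BorelSpace U]
  [SecondCountableTopology U] [MeasurableSpace E] [BorelSpace E] [SecondCountableTopology E]
  [CompleteSpace E] {F : E → U → E} {K : ℝ≥0} {τ : ℝ} {a : E} {u₀ : ℝ → U} {π₀ : ℝ → E}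

theorem eventually_exists_trajectory_dist_lt (hK : LipschitzWith K (uncurry F)) (hτ : 0 < τ)
    (hKτ : K * τ ≤ 1 / 2) (hπ₀ : ContinuousOn π₀ (Icc 0 τ))
    (hg : IntervalIntegrable (fun r => F (π₀ r) (u₀ r)) volume 0 τ)
    (heq : ∀ t ∈ Icc 0 τ, π₀ t = a + ∫ r in (0:ℝ)..t, F (π₀ r) (u₀ r)) {η : ℝ} (hη : 0 < η) :
    ∀ᶠ y in 𝓝 a, ∃ v : ℝ → U, ∃ z : ℝ → E, z 0 = y ∧
      (∀ t ∈ Icc 0 τ, z t = y + ∫ r in (0:ℝ)..t, F (z r) (v r)) ∧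
      ∀ t ∈ Icc 0 τ, dist (z t) (π₀ t) < η := by
  set π' : ℝ → E := IccExtend hτ.le ((Icc 0 τ).domRestrict π₀)
  have hπ' : Continuous π' := continuous_IccExtend_iff.2 hπ₀.domRestrict
  have hπ'π₀ : ∀ t ∈ Icc 0 τ, π' t = π₀ t := fun t ht => IccExtend_of_mem hτ.le _ ht
  have hFc : Continuous (uncurry F) := hK.continuous
  obtain ⟨ε, hε, hεη⟩ : ∃ ε > 0, 2 * ε * Real.exp (K * τ) < η :=
    ⟨η / (3 * Real.exp (K * τ)), by positivity, by field_simp; linarith⟩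
  obtain ⟨v, hv, -, hv_le⟩ := exists_continuous_integral_norm_sub_le
    (μ := volume.restrict (Ioc 0 τ)) (G := fun t => F (π' t))
    (hFc.comp ((hπ'.comp continuous_fst).prodMk continuous_snd))
    (fun t => hK.uncurry_left (π' t))
    (fun u => (hFc.comp (hπ'.prodMk continuous_const)).integrableOn_Ioc)
    ((intervalIntegrable_iff_integrableOn_Ioc_of_le hτ.le).1 hg)
    ((ae_restrict_iff' measurableSet_Ioc).2 (ae_of_all _ fun t ht =>
      ⟨u₀ t, by rw [hπ'π₀ t (Ioc_subset_Icc_self ht)]⟩)) hε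
  have hf : Continuous (uncurry fun r x => F x (v r)) :=
    hFc.comp (continuous_snd.prodMk (hv.comp continuous_fst))
  have hfK : ∀ r, LipschitzWith K fun x => F x (v r) := fun r => hK.uncurry_right (v r)
  have hδ : ∫ r in (0:ℝ)..τ, ‖F (π₀ r) (v r) - F (π₀ r) (u₀ r)‖ ≤ ε := by
    rw [intervalIntegral.integral_of_le hτ.le]
    refine le_of_eq_of_le (setIntegral_congr_fun measurableSet_Ioc fun r hr => ?_) hv_le
    simp only [hπ'π₀ r (Ioc_subset_Icc_self hr)]
  filter_upwards [Metric.ball_mem_nhds a hε] with y hy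
  obtain ⟨z, hz0, hz, hzeq⟩ := exists_eq_add_integral_of_lipschitzWith hf hfK hτ.le hKτ y
  refine ⟨v, z, hz0, hzeq, fun t ht => ?_⟩
  have hexp : Real.exp (K * t) ≤ Real.exp (K * τ) := Real.exp_le_exp.2 (by gcongr; exact ht.2)
  calc dist (z t) (π₀ t) ≤ (‖y - a‖ + ε) * Real.exp (K * t) := by
        rw [dist_eq_norm]
        exact norm_sub_le_of_eq_add_integral hf hfK hτ.le hz hπ₀ hg hzeq heq hδ t ht
    _ ≤ (2 * ε) * Real.exp (K * τ) := by
        gcongr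
        rw [← dist_eq_norm]
        linarith [Metric.mem_ball.1 hy]
    _ < η := hεη

theorem eventually_exists_descent_trajectory (hK : LipschitzWith K (uncurry F)) (hτ : 0 < τ)
    (hKτ : K * τ ≤ 1 / 2) {Φ : E → ℝ} (hΦ : Continuous Φ) {b : E → ℝ} (hb : ContinuousAt b a)
    (hba : 0 < b a) (heq : ∀ t ∈ Icc 0 τ, π₀ t = a + ∫ r in (0:ℝ)..t, F (π₀ r) (u₀ r))
    (hdec : Φ (π₀ τ) < Φ a) (hbd : ∀ t ∈ Icc 0 τ, Φ (π₀ t) ≤ b a) :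
    ∃ q > 0, ∀ᶠ y in 𝓝 a, ∃ v : ℝ → U, ∃ z : ℝ → E, z 0 = y ∧
      (∀ t ∈ Icc 0 τ, z t = y + ∫ r in (0:ℝ)..t, F (z r) (v r)) ∧
      Φ (z τ) ≤ Φ y - q ∧ ∀ t ∈ Icc 0 τ, Φ (z t) ≤ 2 * b y := by
  have hπ₀0 : π₀ 0 = a := by simpa using heq 0 ⟨le_rfl, hτ.le⟩
  -- a non-integrable integrand has integral `0`, which would force `π₀ τ = a`
  have hg : IntervalIntegrable (fun r => F (π₀ r) (u₀ r)) volume 0 τ := by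
    by_contra hg
    have hτa := heq τ ⟨hτ.le, le_rfl⟩
    rw [intervalIntegral.integral_undef hg, add_zero] at hτa
    exact hdec.ne (congrArg Φ hτa)
  have hπ₀ : ContinuousOn π₀ (Icc 0 τ) := by
    have := intervalIntegral.continuousOn_primitive_interval' hg left_mem_uIcc
    rw [uIcc_of_le hτ.le] at this
    exact (continuousOn_const.add this).congr heq
  set q := Φ a - Φ (π₀ τ)
  set δ := min (q / 4) (b a / 2)
  have hδq : δ ≤ q / 4 := min_le_left _ _
  have hδb : δ ≤ b a / 2 := min_le_right _ _
  obtain ⟨η, hη, hΦη⟩ := IsCompact.exists_forall_dist_lt_of_continuous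
    (isCompact_Icc.image_of_continuousOn hπ₀) hΦ (lt_min (by linarith) (by linarith) : 0 < δ)
  have hclose : ∀ t ∈ Icc 0 τ, ∀ x, dist x (π₀ t) < η → |Φ x - Φ (π₀ t)| < δ := fun t ht x hx => by
    simpa only [Real.dist_eq, abs_sub_comm] using
      hΦη (π₀ t) (mem_image_of_mem _ ht) x (by rwa [dist_comm])
  refine ⟨q / 2, by linarith, ?_⟩
  filter_upwards [eventually_exists_trajectory_dist_lt hK hτ hKτ hπ₀ hg heq hη,
    hb.eventually (lt_mem_nhds (by linarith : 3 / 4 * b a < b a))] with y ⟨v, z, hz0, hzeq, hz⟩ hby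
  have hy := hclose 0 ⟨le_rfl, hτ.le⟩ (z 0) (hz 0 ⟨le_rfl, hτ.le⟩)
  rw [hz0, hπ₀0] at hy
  refine ⟨v, z, hz0, hzeq, ?_, fun t ht => ?_⟩
  · have hzτ := hclose τ ⟨hτ.le, le_rfl⟩ (z τ) (hz τ ⟨hτ.le, le_rfl⟩)
    rw [abs_lt] at hy hzτ
    linarith
  · have hzt := hclose t ht (z t) (hz t ht)
    rw [abs_lt] at hzt
    linarith [hbd t ht]

end Trajectories

theorem covering_step_general {n l : ℕ}
    (F : EuclideanSpace ℝ (Fin n) → EuclideanSpace ℝ (Fin l) → EuclideanSpace ℝ (Fin n))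
    (hFlip : ∃ K : NNReal, LipschitzWith K (Function.uncurry F))
    (D₁ D₂ : Set (EuclideanSpace ℝ (Fin n)))
    (L₂ : EReal)
    (Φ : EuclideanSpace ℝ (Fin n) → ℝ) (hΦcont : Continuous Φ) (hΦnonneg : ∀ x, 0 ≤ Φ x)
    (h22b : ∀ x ∈ D₂ \ D₁, 0 < Φ x ∧ (Φ x : EReal) < L₂)
    (β : ℝ → ℝ) (hβ : IsClassK β)
    (h23 : ∀ σ > (0:ℝ), ∀ x ∈ D₂ \ D₁, ∃ τ ∈ Set.Ioc (0:ℝ) σ,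
      ∃ u : ℝ → EuclideanSpace ℝ (Fin l), ∃ π : ℝ → EuclideanSpace ℝ (Fin n),
        π 0 = x ∧
        (∀ t ∈ Set.Icc (0:ℝ) τ, π t = x + ∫ r in (0:ℝ)..t, F (π r) (u r)) ∧
        Φ (π τ) < Φ x ∧
        (∀ t ∈ Set.Icc (0:ℝ) τ, Φ (π t) ≤ β (Φ x))) :
    ∀ σ > (0:ℝ),
      ∃ T : EuclideanSpace ℝ (Fin n) → ℝ,
      ∃ qbar : EuclideanSpace ℝ (Fin n) → ℝ,
        LowerSemicontinuousOn T (D₂ \ D₁) ∧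
        (∀ x ∈ D₂ \ D₁, 0 < T x ∧ T x ≤ σ) ∧
        (∀ x ∈ D₂ \ D₁, 0 < qbar x) ∧
        (∀ a ∈ D₂ \ D₁, ∃ ε > (0:ℝ), ∀ᶠ x in nhdsWithin a (D₂ \ D₁), ε ≤ qbar x) ∧
        ∀ x ∈ D₂ \ D₁,
          ∃ u : ℝ → EuclideanSpace ℝ (Fin l), ∃ π : ℝ → EuclideanSpace ℝ (Fin n),
            π 0 = x ∧
            (∀ t ∈ Set.Icc (0:ℝ) (T x), π t = x + ∫ r in (0:ℝ)..t, F (π r) (u r)) ∧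
            Φ (π (T x)) ≤ Φ x - qbar x ∧
            (∀ t ∈ Set.Icc (0:ℝ) (T x), Φ (π t) ≤ 2 * β (Φ x)) := by
  intro σ hσ
  obtain ⟨K, hK⟩ := hFlip
  obtain ⟨σ', hσ', hσ'σ, hKσ'⟩ : ∃ σ' > 0, σ' ≤ σ ∧ K * σ' ≤ 1 / 2 := by
    refine ⟨min σ (2 * ((K : ℝ) + 1))⁻¹, by positivity, min_le_left _ _, ?_⟩
    calc K * min σ (2 * ((K : ℝ) + 1))⁻¹ ≤ (K + 1) * (2 * ((K : ℝ) + 1))⁻¹ := by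
          gcongr
          · linarith
          · exact min_le_right _ _
      _ = 1 / 2 := by field_simp
  refine exists_lowerSemicontinuousOn_of_forall_eventually (I := Ioc 0 σ)
    (P := fun x τ q => ∃ u : ℝ → EuclideanSpace ℝ (Fin l), ∃ π : ℝ → EuclideanSpace ℝ (Fin n),
      π 0 = x ∧ (∀ t ∈ Icc 0 τ, π t = x + ∫ r in (0:ℝ)..t, F (π r) (u r)) ∧
      Φ (π τ) ≤ Φ x - q ∧ ∀ t ∈ Icc 0 τ, Φ (π t) ≤ 2 * β (Φ x))
    (fun x τ q q' hq ⟨u, π, h0, heq, hdec, hbd⟩ => ⟨u, π, h0, heq, by linarith, hbd⟩)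
    fun a ha => ?_
  obtain ⟨τ, hτ, u, π, -, heq, hdec, hbd⟩ := h23 σ' hσ' a ha
  have hβa : 0 < β (Φ a) := hβ.2.2 ▸ hβ.2.1 self_mem_Ici (hΦnonneg a) (h22b a ha).1
  obtain ⟨q, hq, hev⟩ := eventually_exists_descent_trajectory hK hτ.1
    ((mul_le_mul_of_nonneg_left hτ.2 K.2).trans hKσ') hΦcont
    (hβ.1.comp_continuous hΦcont hΦnonneg).continuousAt hβa heq hdec hbd
  exact ⟨τ, ⟨hτ.1, hτ.2.trans hσ'σ⟩, q, hq, nhdsWithin_le_nhds hev⟩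

/-- The key step (2.10)–(2.11) in the proof of Proposition 1: under hypotheses (2.2)–(2.3),
with `β̄ := 2β`, for every `σ > 0` there exist a lower semicontinuous map
`T : D₂ \ D₁ → (0, σ]` and a map `q̄ : D₂ \ D₁ → (0,∞)` with `liminf_{x→a} q̄(x) > 0` for
every `a ∈ D₂ \ D₁`, such that for every `x ∈ D₂ \ D₁` there is a control with
`Φ(π(T x)) ≤ Φ(x) − q̄(x)` and `Φ(π(t)) ≤ β̄(Φ(x))` on `[0, T x]`. -/
theorem covering_step {n l : ℕ}
    (F : EuclideanSpace ℝ (Fin n) → EuclideanSpace ℝ (Fin l) → EuclideanSpace ℝ (Fin n))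
    (hFlip : ∃ K : NNReal, LipschitzWith K (Function.uncurry F))
    (hF0 : F 0 0 = 0)
    (D₁ D₂ : Set (EuclideanSpace ℝ (Fin n)))
    (hD₁closed : IsClosed D₁) (h0D₁ : (0 : EuclideanSpace ℝ (Fin n)) ∈ D₁)
    (hD₂open : IsOpen D₂) (hD₁D₂ : D₁ ⊆ D₂)
    (L₁ L₂ : EReal) (hL₁ : 0 ≤ L₁) (hL₁₂ : L₁ < L₂)
    (Φ : EuclideanSpace ℝ (Fin n) → ℝ) (hΦcont : Continuous Φ) (hΦnonneg : ∀ x, 0 ≤ Φ x)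
    (h22a : ∀ x ∈ D₁, (Φ x : EReal) ≤ L₁)
    (h22b : ∀ x ∈ D₂ \ D₁, 0 < Φ x ∧ (Φ x : EReal) < L₂)
    (h22c : ∀ x, x ∉ D₂ → L₂ ≤ (Φ x : EReal))
    (h22d : ∀ x ∈ frontier D₂, (Φ x : EReal) = L₂)
    (h22e : ∀ xs : ℕ → EuclideanSpace ℝ (Fin n), (∀ ν, xs ν ∈ D₂ \ D₁) →
      Tendsto (fun ν => ‖xs ν‖) atTop atTop →
      Filter.limsup (fun ν => (Φ (xs ν) : EReal)) atTop = L₂)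
    (β : ℝ → ℝ) (hβ : IsClassK β)
    (h23 : ∀ σ > (0:ℝ), ∀ x ∈ D₂ \ D₁, ∃ τ ∈ Set.Ioc (0:ℝ) σ,
      ∃ u : ℝ → EuclideanSpace ℝ (Fin l), ∃ π : ℝ → EuclideanSpace ℝ (Fin n),
        π 0 = x ∧
        (∀ t ∈ Set.Icc (0:ℝ) τ, π t = x + ∫ r in (0:ℝ)..t, F (π r) (u r)) ∧
        Φ (π τ) < Φ x ∧
        (∀ t ∈ Set.Icc (0:ℝ) τ, Φ (π t) ≤ β (Φ x))) :
    ∀ σ > (0:ℝ),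
      ∃ T : EuclideanSpace ℝ (Fin n) → ℝ,
      ∃ qbar : EuclideanSpace ℝ (Fin n) → ℝ,
        LowerSemicontinuousOn T (D₂ \ D₁) ∧
        (∀ x ∈ D₂ \ D₁, 0 < T x ∧ T x ≤ σ) ∧
        (∀ x ∈ D₂ \ D₁, 0 < qbar x) ∧
        (∀ a ∈ D₂ \ D₁, ∃ ε > (0:ℝ), ∀ᶠ x in nhdsWithin a (D₂ \ D₁), ε ≤ qbar x) ∧
        ∀ x ∈ D₂ \ D₁,
          ∃ u : ℝ → EuclideanSpace ℝ (Fin l), ∃ π : ℝ → EuclideanSpace ℝ (Fin n),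
            π 0 = x ∧
            (∀ t ∈ Set.Icc (0:ℝ) (T x), π t = x + ∫ r in (0:ℝ)..t, F (π r) (u r)) ∧
            Φ (π (T x)) ≤ Φ x - qbar x ∧
            (∀ t ∈ Set.Icc (0:ℝ) (T x), Φ (π t) ≤ 2 * β (Φ x)) :=
  covering_step_general F hFlip D₁ D₂ L₂ Φ hΦcont hΦnonneg h22b β hβ h23
end
end

section
/- Consider the planar driftless system (ẋ, ẏ) = u₁ (A₁(x,y), B₁(x,y)) + u₂ (A₂(x,y), B₂(x,y)) on ℝ² with scalar states x, y and inputs u₁, u₂ ∈ ℝ, where A_i, B_i : ℝ² → ℝ are C¹ (smooth) and satisfy: A₁(0,·) = A₂(0,·) = 0 and B₁(·,0) = B₂(·,0) = 0; ∂A₁/∂x·A₂ ≠ ∂A₂/∂x·A₁ at every (x,y) with x ≠ 0; ∂B₁/∂y·B₂ ≠ ∂B₂/∂y·B₁ at every (x,y) with y ≠ 0; and A₁B₂ ≠ A₂B₁ at every (x,y) with x ≠ 0 and y ≠ 0. Then the system is SDF-WGAS. -/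
open MeasureTheory Filter Set

noncomputable section

/-- Weak Global Asymptotic Stabilizability by Sampled-Data Feedback (Definition 2):
for every `σ > 0` there are a sampling-period map `T` with `T 0 = 0` and `0 < T x ≤ σ`
for `x ≠ 0`, and a feedback map `φfb` vanishing at the origin, measurable and essentially
bounded in the first two variables, such that for every nonzero initial state there is a
sequence of sampling times with differences `T (π (tᵢ))` tending to `∞`, the closed-loop
control `u(t) = φfb t tᵢ (π tᵢ)` on `[tᵢ, tᵢ₊₁)`, such that the closed-loop trajectories
satisfy stability and attractivity. -/
def SDFWGAS {E U : Type*} [NormedAddCommGroup E] [NormedSpace ℝ E]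
    [NormedAddCommGroup U] [MeasurableSpace U] (F : E → U → E) : Prop :=
  ∀ σ > (0:ℝ),
    ∃ T : E → ℝ, ∃ φfb : ℝ → ℝ → E → U,
    ∃ traj : E → ℝ → E, ∃ ctrl : E → ℝ → U, ∃ ts : E → ℕ → ℝ,
      T 0 = 0 ∧ (∀ x, x ≠ 0 → 0 < T x ∧ T x ≤ σ) ∧
      (∀ t s : ℝ, φfb t s 0 = 0) ∧
      (∀ x, Measurable (fun p : ℝ × ℝ => φfb p.1 p.2 x)) ∧
      (∀ x, ∃ C : ℝ, ∀ᵐ p : ℝ × ℝ ∂(volume), ‖φfb p.1 p.2 x‖ ≤ C) ∧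
      (∀ x0, x0 ≠ 0 →
        StrictMono (ts x0) ∧ ts x0 0 = 0 ∧
        Tendsto (ts x0) atTop atTop ∧
        (∀ ν : ℕ, ts x0 (ν+1) - ts x0 ν = T (traj x0 (ts x0 ν))) ∧
        (∀ ν : ℕ, ∀ t ∈ Set.Ico (ts x0 ν) (ts x0 (ν+1)),
          ctrl x0 t = φfb t (ts x0 ν) (traj x0 (ts x0 ν))) ∧
        traj x0 0 = x0 ∧
        (∀ t : ℝ, 0 ≤ t →
          traj x0 t = x0 + ∫ r in (0:ℝ)..t, F (traj x0 r) (ctrl x0 r)) ∧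
        Tendsto (traj x0) atTop (nhds 0)) ∧
      (∀ ε > (0:ℝ), ∃ δ > (0:ℝ), ∀ x0, x0 ≠ 0 → ‖x0‖ ≤ δ →
        ∀ t : ℝ, 0 ≤ t → ‖traj x0 t‖ ≤ ε)

namespace Example2Aux

/-- Pointwise control solving `F ξ (uu ξ) = -ξ`. -/
def uu (A₁ A₂ B₁ B₂ : ℝ × ℝ → ℝ) (ξ : ℝ × ℝ) : ℝ × ℝ :=
  if ξ.1 = 0 then
    if ξ.2 = 0 then 0
    else (-ξ.2 * B₁ ξ / (B₁ ξ ^ 2 + B₂ ξ ^ 2), -ξ.2 * B₂ ξ / (B₁ ξ ^ 2 + B₂ ξ ^ 2))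
  else if ξ.2 = 0 then
    (-ξ.1 * A₁ ξ / (A₁ ξ ^ 2 + A₂ ξ ^ 2), -ξ.1 * A₂ ξ / (A₁ ξ ^ 2 + A₂ ξ ^ 2))
  else ((-ξ.1 * B₂ ξ + ξ.2 * A₂ ξ) / (A₁ ξ * B₂ ξ - A₂ ξ * B₁ ξ),
        (ξ.1 * B₁ ξ - ξ.2 * A₁ ξ) / (A₁ ξ * B₂ ξ - A₂ ξ * B₁ ξ))

variable (A₁ A₂ B₁ B₂ : ℝ × ℝ → ℝ)

lemma uu_zero : uu A₁ A₂ B₁ B₂ 0 = 0 := by simp [uu]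

lemma uu_solves
    (hA₁0 : ∀ y : ℝ, A₁ (0, y) = 0) (hA₂0 : ∀ y : ℝ, A₂ (0, y) = 0)
    (hB₁0 : ∀ x : ℝ, B₁ (x, 0) = 0) (hB₂0 : ∀ x : ℝ, B₂ (x, 0) = 0)
    (hDA : ∀ ξ : ℝ × ℝ, ξ.1 ≠ 0 → A₁ ξ ^ 2 + A₂ ξ ^ 2 ≠ 0)
    (hDB : ∀ ξ : ℝ × ℝ, ξ.2 ≠ 0 → B₁ ξ ^ 2 + B₂ ξ ^ 2 ≠ 0)
    (hΔ : ∀ ξ : ℝ × ℝ, ξ.1 ≠ 0 → ξ.2 ≠ 0 → A₁ ξ * B₂ ξ - A₂ ξ * B₁ ξ ≠ 0)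
    (ξ : ℝ × ℝ) :
    (((uu A₁ A₂ B₁ B₂ ξ).1 * A₁ ξ + (uu A₁ A₂ B₁ B₂ ξ).2 * A₂ ξ,
      (uu A₁ A₂ B₁ B₂ ξ).1 * B₁ ξ + (uu A₁ A₂ B₁ B₂ ξ).2 * B₂ ξ) : ℝ × ℝ) = -ξ := by
  obtain ⟨a, b⟩ := ξ
  by_cases ha : a = 0
  · by_cases hb : b = 0
    · simp [uu, ha, hb, hA₁0, hB₁0]
    · subst ha
      have hA1 : A₁ (0, b) = 0 := hA₁0 b
      have hA2 : A₂ (0, b) = 0 := hA₂0 b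
      have hD := hDB (0, b) hb
      simp only [uu, hb, if_true, if_false, ite_true, ite_false]
      simp only [Prod.mk.injEq, Prod.neg_mk]
      refine ⟨by simp [hA1, hA2], ?_⟩
      field_simp
      ring
  · by_cases hb : b = 0
    · subst hb
      have hB1 : B₁ (a, 0) = 0 := hB₁0 a
      have hB2 : B₂ (a, 0) = 0 := hB₂0 a
      have hD := hDA (a, 0) ha
      simp only [uu, ha, if_true, if_false, ite_true, ite_false]
      simp only [Prod.mk.injEq, Prod.neg_mk]
      refine ⟨?_, by simp [hB1, hB2]⟩
      field_simp
      ring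
    · have hD := hΔ (a, b) ha hb
      simp only [uu, ha, hb, if_true, if_false, ite_true, ite_false]
      simp only [Prod.mk.injEq, Prod.neg_mk]
      constructor
      · rw [div_mul_eq_mul_div, div_mul_eq_mul_div, ← add_div, div_eq_iff hD]
        ring
      · rw [div_mul_eq_mul_div, div_mul_eq_mul_div, ← add_div, div_eq_iff hD]
        ring

lemma uu_ray_continuous
    (hA₁ : Continuous A₁) (hA₂ : Continuous A₂)
    (hB₁ : Continuous B₁) (hB₂ : Continuous B₂)
    (hDA : ∀ ξ : ℝ × ℝ, ξ.1 ≠ 0 → A₁ ξ ^ 2 + A₂ ξ ^ 2 ≠ 0)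
    (hDB : ∀ ξ : ℝ × ℝ, ξ.2 ≠ 0 → B₁ ξ ^ 2 + B₂ ξ ^ 2 ≠ 0)
    (hΔ : ∀ ξ : ℝ × ℝ, ξ.1 ≠ 0 → ξ.2 ≠ 0 → A₁ ξ * B₂ ξ - A₂ ξ * B₁ ξ ≠ 0)
    (x : ℝ × ℝ) :
    Continuous (fun r : ℝ => uu A₁ A₂ B₁ B₂ (Real.exp (-r) • x)) := by
  have hinner : Continuous (fun r : ℝ => Real.exp (-r) • x) :=
    (Real.continuous_exp.comp continuous_neg).smul continuous_const
  by_cases hx1 : x.1 = 0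
  · by_cases hx2 : x.2 = 0
    · have hx : x = 0 := Prod.ext hx1 hx2
      simp only [hx, smul_zero]
      exact continuous_const
    · -- stratum {ξ.1 = 0, ξ.2 ≠ 0}
      set S : Set (ℝ × ℝ) := {ξ | ξ.1 = 0 ∧ ξ.2 ≠ 0} with hS
      have hf : ContinuousOn (fun ξ : ℝ × ℝ =>
          ((-ξ.2 * B₁ ξ / (B₁ ξ ^ 2 + B₂ ξ ^ 2), -ξ.2 * B₂ ξ / (B₁ ξ ^ 2 + B₂ ξ ^ 2)) : ℝ × ℝ)) S := by
        apply ContinuousOn.prodMk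
        · exact ((continuous_snd.neg.mul hB₁).continuousOn).div
            (((hB₁.pow 2).add (hB₂.pow 2)).continuousOn) (fun ξ hξ => hDB ξ hξ.2)
        · exact ((continuous_snd.neg.mul hB₂).continuousOn).div
            (((hB₁.pow 2).add (hB₂.pow 2)).continuousOn) (fun ξ hξ => hDB ξ hξ.2)
      have hcu : ContinuousOn (uu A₁ A₂ B₁ B₂) S :=
        hf.congr (fun ξ hξ => by simp [uu, hξ.1, hξ.2])
      have hmaps : ∀ r : ℝ, Real.exp (-r) • x ∈ S := by
        intro r
        refine ⟨?_, ?_⟩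
        · show Real.exp (-r) * x.1 = 0
          rw [hx1, mul_zero]
        · show Real.exp (-r) * x.2 ≠ 0
          exact mul_ne_zero (Real.exp_ne_zero _) hx2
      exact hcu.comp_continuous hinner hmaps
  · by_cases hx2 : x.2 = 0
    · set S : Set (ℝ × ℝ) := {ξ | ξ.1 ≠ 0 ∧ ξ.2 = 0} with hS
      have hf : ContinuousOn (fun ξ : ℝ × ℝ =>
          ((-ξ.1 * A₁ ξ / (A₁ ξ ^ 2 + A₂ ξ ^ 2), -ξ.1 * A₂ ξ / (A₁ ξ ^ 2 + A₂ ξ ^ 2)) : ℝ × ℝ)) S := by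
        apply ContinuousOn.prodMk
        · exact ((continuous_fst.neg.mul hA₁).continuousOn).div
            (((hA₁.pow 2).add (hA₂.pow 2)).continuousOn) (fun ξ hξ => hDA ξ hξ.1)
        · exact ((continuous_fst.neg.mul hA₂).continuousOn).div
            (((hA₁.pow 2).add (hA₂.pow 2)).continuousOn) (fun ξ hξ => hDA ξ hξ.1)
      have hcu : ContinuousOn (uu A₁ A₂ B₁ B₂) S :=
        hf.congr (fun ξ hξ => by simp [uu, hξ.1, hξ.2])
      have hmaps : ∀ r : ℝ, Real.exp (-r) • x ∈ S := by
        intro r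
        refine ⟨?_, ?_⟩
        · show Real.exp (-r) * x.1 ≠ 0
          exact mul_ne_zero (Real.exp_ne_zero _) hx1
        · show Real.exp (-r) * x.2 = 0
          rw [hx2, mul_zero]
      exact hcu.comp_continuous hinner hmaps
    · set S : Set (ℝ × ℝ) := {ξ | ξ.1 ≠ 0 ∧ ξ.2 ≠ 0} with hS
      have hf : ContinuousOn (fun ξ : ℝ × ℝ =>
          (((-ξ.1 * B₂ ξ + ξ.2 * A₂ ξ) / (A₁ ξ * B₂ ξ - A₂ ξ * B₁ ξ),
            (ξ.1 * B₁ ξ - ξ.2 * A₁ ξ) / (A₁ ξ * B₂ ξ - A₂ ξ * B₁ ξ)) : ℝ × ℝ)) S := by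
        apply ContinuousOn.prodMk
        · exact (((continuous_fst.neg.mul hB₂).add (continuous_snd.mul hA₂)).continuousOn).div
            (((hA₁.mul hB₂).sub (hA₂.mul hB₁)).continuousOn) (fun ξ hξ => hΔ ξ hξ.1 hξ.2)
        · exact (((continuous_fst.mul hB₁).sub (continuous_snd.mul hA₁)).continuousOn).div
            (((hA₁.mul hB₂).sub (hA₂.mul hB₁)).continuousOn) (fun ξ hξ => hΔ ξ hξ.1 hξ.2)
      have hcu : ContinuousOn (uu A₁ A₂ B₁ B₂) S :=
        hf.congr (fun ξ hξ => by simp [uu, hξ.1, hξ.2])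
      have hmaps : ∀ r : ℝ, Real.exp (-r) • x ∈ S := by
        intro r
        exact ⟨mul_ne_zero (Real.exp_ne_zero _) hx1, mul_ne_zero (Real.exp_ne_zero _) hx2⟩
      exact hcu.comp_continuous hinner hmaps


end Example2Aux

/-- Example 2: the planar driftless system
`(ẋ, ẏ) = u₁ (A₁(x,y), B₁(x,y)) + u₂ (A₂(x,y), B₂(x,y))` with smooth `Aᵢ, Bᵢ` satisfying
(4.40)–(4.42) is SDF-WGAS. -/
theorem example2 (A₁ A₂ B₁ B₂ : ℝ × ℝ → ℝ)
    (hA₁ : ContDiff ℝ (⊤ : ℕ∞) A₁) (hA₂ : ContDiff ℝ (⊤ : ℕ∞) A₂)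
    (hB₁ : ContDiff ℝ (⊤ : ℕ∞) B₁) (hB₂ : ContDiff ℝ (⊤ : ℕ∞) B₂)
    -- (4.40)
    (hA₁0 : ∀ y : ℝ, A₁ (0, y) = 0) (hA₂0 : ∀ y : ℝ, A₂ (0, y) = 0)
    (hB₁0 : ∀ x : ℝ, B₁ (x, 0) = 0) (hB₂0 : ∀ x : ℝ, B₂ (x, 0) = 0)
    -- (4.41a)
    (h441a : ∀ x y : ℝ, x ≠ 0 →
      deriv (fun x' => A₁ (x', y)) x * A₂ (x, y) ≠
        deriv (fun x' => A₂ (x', y)) x * A₁ (x, y))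
    -- (4.41b)
    (h441b : ∀ x y : ℝ, y ≠ 0 →
      deriv (fun y' => B₁ (x, y')) y * B₂ (x, y) ≠
        deriv (fun y' => B₂ (x, y')) y * B₁ (x, y))
    -- (4.42)
    (h442 : ∀ x y : ℝ, x ≠ 0 → y ≠ 0 →
      A₁ (x, y) * B₂ (x, y) ≠ A₂ (x, y) * B₁ (x, y)) :
    SDFWGAS (fun (ξ : ℝ × ℝ) (u : ℝ × ℝ) =>
      (u.1 * A₁ ξ + u.2 * A₂ ξ, u.1 * B₁ ξ + u.2 * B₂ ξ)) := by
  intro σ hσ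
  -- Nondegeneracy facts
  have hDA : ∀ ξ : ℝ × ℝ, ξ.1 ≠ 0 → A₁ ξ ^ 2 + A₂ ξ ^ 2 ≠ 0 := by
    intro ξ hξ h
    have h1 : A₁ ξ = 0 := by nlinarith [sq_nonneg (A₁ ξ), sq_nonneg (A₂ ξ)]
    have h2 : A₂ ξ = 0 := by nlinarith [sq_nonneg (A₁ ξ), sq_nonneg (A₂ ξ)]
    exact h441a ξ.1 ξ.2 hξ (by simp [h1, h2])
  have hDB : ∀ ξ : ℝ × ℝ, ξ.2 ≠ 0 → B₁ ξ ^ 2 + B₂ ξ ^ 2 ≠ 0 := by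
    intro ξ hξ h
    have h1 : B₁ ξ = 0 := by nlinarith [sq_nonneg (B₁ ξ), sq_nonneg (B₂ ξ)]
    have h2 : B₂ ξ = 0 := by nlinarith [sq_nonneg (B₁ ξ), sq_nonneg (B₂ ξ)]
    exact h441b ξ.1 ξ.2 hξ (by simp [h1, h2])
  have hΔ : ∀ ξ : ℝ × ℝ, ξ.1 ≠ 0 → ξ.2 ≠ 0 → A₁ ξ * B₂ ξ - A₂ ξ * B₁ ξ ≠ 0 := by
    intro ξ h1 h2
    have := h442 ξ.1 ξ.2 h1 h2
    rw [Prod.mk.eta] at this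
    exact sub_ne_zero.mpr this
  set u : ℝ × ℝ → ℝ × ℝ := Example2Aux.uu A₁ A₂ B₁ B₂ with hu_def
  have husolve : ∀ ξ : ℝ × ℝ,
      (((u ξ).1 * A₁ ξ + (u ξ).2 * A₂ ξ, (u ξ).1 * B₁ ξ + (u ξ).2 * B₂ ξ) : ℝ × ℝ) = -ξ :=
    Example2Aux.uu_solves A₁ A₂ B₁ B₂ hA₁0 hA₂0 hB₁0 hB₂0 hDA hDB hΔ
  have hu0 : u 0 = 0 := Example2Aux.uu_zero A₁ A₂ B₁ B₂
  have hq : ∀ x : ℝ × ℝ, Continuous (fun r : ℝ => u (Real.exp (-r) • x)) :=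
    Example2Aux.uu_ray_continuous A₁ A₂ B₁ B₂ hA₁.continuous hA₂.continuous
      hB₁.continuous hB₂.continuous hDA hDB hΔ
  -- clamp function
  have hclamp : Continuous (fun p : ℝ × ℝ => min σ (max 0 (p.1 - p.2))) :=
    continuous_const.min (continuous_const.max (continuous_fst.sub continuous_snd))
  have hclamp_mem : ∀ p : ℝ × ℝ, min σ (max 0 (p.1 - p.2)) ∈ Set.Icc (0:ℝ) σ := by
    intro p
    exact ⟨le_min hσ.le (le_max_left _ _), min_le_left _ _⟩
  refine ⟨fun ξ => if ξ = 0 then 0 else σ,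
    fun t s ξ => u (Real.exp (-(min σ (max 0 (t - s)))) • ξ),
    fun x0 t => Real.exp (-t) • x0,
    fun x0 t => u (Real.exp (-t) • x0),
    fun _ ν => (ν : ℝ) * σ,
    by simp, ?_, ?_, ?_, ?_, ?_, ?_⟩
  · intro x hx
    simp only [if_neg hx]
    exact ⟨hσ, le_refl σ⟩
  · intro t s
    simp [hu0]
  · intro x
    exact ((hq x).comp hclamp).measurable
  · intro x
    obtain ⟨C, hC⟩ := (isCompact_Icc (a := (0:ℝ)) (b := σ)).exists_bound_of_continuousOn
      (hq x).continuousOn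
    refine ⟨C, Filter.Eventually.of_forall (fun p => ?_)⟩
    exact hC _ (hclamp_mem p)
  · intro x0 hx0
    have hne : ∀ t : ℝ, Real.exp (-t) • x0 ≠ 0 := by
      intro t h
      rcases smul_eq_zero.mp h with h | h
      · exact Real.exp_ne_zero _ h
      · exact hx0 h
    refine ⟨?_, by simp, ?_, ?_, ?_, by simp, ?_, ?_⟩
    · intro a b hab
      exact mul_lt_mul_of_pos_right (by exact_mod_cast hab) hσ
    · exact Filter.Tendsto.atTop_mul_const hσ tendsto_natCast_atTop_atTop
    · intro ν
      show ((ν + 1 : ℕ) : ℝ) * σ - (ν : ℝ) * σ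
          = if Real.exp (-((ν : ℝ) * σ)) • x0 = 0 then 0 else σ
      rw [if_neg (hne _)]
      push_cast
      ring
    · intro ν t ht
      have ht1 : (ν : ℝ) * σ ≤ t := ht.1
      have ht2 : t < ((ν + 1 : ℕ) : ℝ) * σ := ht.2
      push_cast at ht2
      show u (Real.exp (-t) • x0)
          = u (Real.exp (-(min σ (max 0 (t - (ν : ℝ) * σ)))) • (Real.exp (-((ν : ℝ) * σ)) • x0))
      have hmax : max 0 (t - (ν : ℝ) * σ) = t - (ν : ℝ) * σ := max_eq_right (by linarith)
      have hmin : min σ (t - (ν : ℝ) * σ) = t - (ν : ℝ) * σ := min_eq_right (by linarith)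
      rw [hmax, hmin, smul_smul, ← Real.exp_add]
      have harg : (-(t - (ν : ℝ) * σ)) + (-((ν : ℝ) * σ)) = -t := by ring
      rw [harg]
    · intro t ht
      have hintegrand : ∀ r : ℝ,
          (((u (Real.exp (-r) • x0)).1 * A₁ (Real.exp (-r) • x0) +
              (u (Real.exp (-r) • x0)).2 * A₂ (Real.exp (-r) • x0),
            (u (Real.exp (-r) • x0)).1 * B₁ (Real.exp (-r) • x0) +
              (u (Real.exp (-r) • x0)).2 * B₂ (Real.exp (-r) • x0)) : ℝ × ℝ)
          = (-(Real.exp (-r))) • x0 := by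
        intro r
        rw [husolve (Real.exp (-r) • x0), neg_smul]
      simp only [hintegrand]
      rw [intervalIntegral.integral_smul_const]
      have hexp : ∫ r in (0:ℝ)..t, -Real.exp (-r) = Real.exp (-t) - 1 := by
        rw [intervalIntegral.integral_neg,
          intervalIntegral.integral_comp_neg (fun r => Real.exp r), integral_exp]
        simp
      rw [hexp]
      module
    · have h1 : Filter.Tendsto (fun t : ℝ => Real.exp (-t)) atTop (nhds 0) := by
        simpa using Real.tendsto_exp_neg_atTop_nhds_zero
      simpa using h1.smul_const x0
  · intro ε hε
    refine ⟨ε, hε, fun x0 _ hx0 t ht => ?_⟩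
    rw [norm_smul]
    calc ‖Real.exp (-t)‖ * ‖x0‖ ≤ 1 * ‖x0‖ := by
          apply mul_le_mul_of_nonneg_right _ (norm_nonneg _)
          rw [Real.norm_eq_abs, abs_of_pos (Real.exp_pos _)]
          exact Real.exp_le_one_iff.mpr (by linarith)
      _ ≤ ε := by simpa using hx0
end
end
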